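/- arXiv:1703.06612 — 9 statements merged into one kernel-verified Lean document; each statement's English description precedes it below -/
import Mathlib

section
/- Let n ≥ 3 and let T be an admissible family of ordered pairs on Fin n. Then the simple graph Γ_T on the vertex set Fin n, in which distinct vertices u and v are adjacent if and only if (u,v) ∈ T or (v,u) ∈ T, is acyclic (contains no cycle). -/
/-- The half-open arc `[i, j)` in the cyclically ordered set `Fin n`:
the set of `x` such that the clock distance from `i` to `x` is smaller
than the clock distance from `i` to `j`. -/
def arcSet {n : ℕ} (i j : Fin n) : Set (Fin n) :=
  {x | ((x - i : Fin n) : ℕ) < ((j - i : Fin n) : ℕ)}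

/-- A finite family of ordered pairs `(i, j)` (thought of as the arcs `[i, j)`)
is admissible if all pairs have distinct coordinates, any two arcs meeting
in at least one point are nested, and any two disjoint arcs have a union
which is not an arc. -/
def IsAdmissible {n : ℕ} (T : Finset (Fin n × Fin n)) : Prop :=
  (∀ p ∈ T, p.1 ≠ p.2) ∧
  ∀ p ∈ T, ∀ q ∈ T, p ≠ q →
    ((arcSet p.1 p.2 ∩ arcSet q.1 q.2).Nonempty →
        arcSet p.1 p.2 ⊆ arcSet q.1 q.2 ∨ arcSet q.1 q.2 ⊆ arcSet p.1 p.2) ∧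
    (arcSet p.1 p.2 ∩ arcSet q.1 q.2 = ∅ → p.2 ≠ q.1 ∧ q.2 ≠ p.1)


set_option linter.unusedSectionVars false

open Fin.NatCast Fin.CommRing

namespace AdmAux

variable {n : ℕ}

/-- clock distance from `i` to `j` -/
def dd (i j : Fin n) : ℕ := ((j - i : Fin n) : ℕ)

lemma dd_lt (i j : Fin n) : dd i j < n := (j - i).isLt

variable [NeZero n]

lemma dd_self (i : Fin n) : dd i i = 0 := by
  rw [dd, Fin.sub_self, Fin.val_zero]

lemma dd_eq_zero {i j : Fin n} : dd i j = 0 ↔ i = j := by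
  rw [dd, show ((j - i : Fin n) : ℕ) = 0 ↔ (j - i : Fin n) = 0 from
    ⟨fun h => Fin.ext (by simpa using h), fun h => by simp [h]⟩, sub_eq_zero, eq_comm]

lemma add_dd (i j : Fin n) : i + ((dd i j : ℕ) : Fin n) = j := by
  rw [dd, Fin.cast_val_eq_self, add_comm]
  exact sub_add_cancel j i

lemma dd_add_mod (i j k : Fin n) : dd i k = (dd i j + dd j k) % n := by
  have h : k - i = (j - i) + (k - j) := by ring
  rw [dd, h, Fin.val_add]; rfl

lemma dd_add {i j k : Fin n} (h : dd i j + dd j k < n) :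
    dd i k = dd i j + dd j k := by
  rw [dd_add_mod i j k]; exact Nat.mod_eq_of_lt h

lemma dd_comm_n {i j : Fin n} (h : i ≠ j) : dd i j + dd j i = n := by
  have h0 : dd i i = (dd i j + dd j i) % n := dd_add_mod i j i
  rw [dd_self] at h0
  have hd : n ∣ dd i j + dd j i := Nat.dvd_of_mod_eq_zero h0.symm
  obtain ⟨c, hc⟩ := hd
  have h1 : dd i j < n := dd_lt i j
  have h2 : dd j i < n := dd_lt j i
  have h3 : dd i j ≠ 0 := fun h' => h (dd_eq_zero.mp h')
  match c with
  | 0 => omega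
  | 1 => omega
  | (c+2) =>
    have : n * (c + 2) = n * c + n + n := by ring
    omega

lemma dd_cast_add (i : Fin n) {m : ℕ} (h : m < n) : dd i (i + (m : Fin n)) = m := by
  have h1 : (i + (m : Fin n)) - i = (m : Fin n) := by ring
  rw [dd, h1, Fin.val_natCast, Nat.mod_eq_of_lt h]

lemma dd_right_inj {a x y : Fin n} (h : dd a x = dd a y) : x = y := by
  have hx := add_dd a x
  have hy := add_dd a y
  rw [h] at hx
  exact hx.symm.trans hy

lemma mem_arc {i j x : Fin n} : x ∈ arcSet i j ↔ dd i x < dd i j := Iff.rfl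

lemma self_mem_arc {i j : Fin n} (h : i ≠ j) : i ∈ arcSet i j := by
  rw [mem_arc, dd_self]
  exact Nat.pos_of_ne_zero (fun h' => h (dd_eq_zero.mp h'))

lemma arc_sub {i j a b : Fin n} (hn1 : 1 < n) (hij : i ≠ j)
    (hsub : arcSet i j ⊆ arcSet a b) : dd a i + dd i j ≤ dd a b := by
  have hd : 0 < dd i j := Nat.pos_of_ne_zero (fun h' => hij (dd_eq_zero.mp h'))
  have key : ∀ k, k < dd i j → dd a (i + (k : Fin n)) = dd a i + k ∧ dd a i + k < dd a b := by
    intro k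
    induction k with
    | zero =>
      intro _
      have h0 : i + ((0:ℕ) : Fin n) = i := by push_cast; ring
      refine ⟨by rw [h0]; omega, ?_⟩
      have := hsub (self_mem_arc hij)
      rw [mem_arc] at this; omega
    | succ k ih =>
      intro hk1
      obtain ⟨e1, e2⟩ := ih (by omega)
      have hab : dd a b < n := dd_lt a b
      have hlt : dd a i + k + 1 < n := by omega
      have hsplit : i + ((k+1 : ℕ) : Fin n) = (i + (k : Fin n)) + 1 := by push_cast; ring
      have h1n : ((1:ℕ) : Fin n) = (1 : Fin n) := by push_cast; rfl
      have hstep : dd a ((i + (k : Fin n)) + 1) = (dd a (i + (k : Fin n)) + 1) % n := by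
        have := dd_add_mod a (i + (k : Fin n)) ((i + (k : Fin n)) + 1)
        rw [this]
        congr 1
        have := dd_cast_add (i + (k : Fin n)) (m := 1) hn1
        rw [h1n] at this
        rw [this]
      have hval : dd a (i + ((k+1:ℕ) : Fin n)) = dd a i + (k + 1) := by
        rw [hsplit, hstep, e1, Nat.mod_eq_of_lt (by omega)]
        omega
      refine ⟨hval, ?_⟩
      have hmem : i + ((k+1:ℕ) : Fin n) ∈ arcSet i j := by
        rw [mem_arc, dd_cast_add i (by have := dd_lt i j; omega)]
        exact hk1
      have := hsub hmem
      rw [mem_arc, hval] at this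
      omega
  obtain ⟨_, h2⟩ := key (dd i j - 1) (by omega)
  omega

lemma arc_sub' {i j a b : Fin n} (h : dd a i + dd i j ≤ dd a b) :
    arcSet i j ⊆ arcSet a b := by
  intro x hx
  rw [mem_arc] at hx ⊢
  have hab : dd a b < n := dd_lt a b
  have hx2 : dd a x = dd a i + dd i x := dd_add (by omega)
  omega

lemma mem_coord {i j a x : Fin n} (h : dd a i + dd i j < n) (hx : x ∈ arcSet i j) :
    dd a x = dd a i + dd i x := by
  rw [mem_arc] at hx
  exact dd_add (by omega)

lemma coord_mem {i j a : Fin n} {m : ℕ} (h1 : dd a i ≤ m) (h2 : m < dd a i + dd i j)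
    (h3 : m < n) : a + (m : Fin n) ∈ arcSet i j := by
  obtain ⟨p, hp⟩ : ∃ p, dd a i = p := ⟨_, rfl⟩
  rw [hp] at h1 h2
  have hi : a + ((p : ℕ) : Fin n) = i := by rw [← hp]; exact add_dd a i
  have key : i + ((m - p : ℕ) : Fin n) = a + (m : Fin n) := by
    rw [← hi, add_assoc, ← Nat.cast_add, show p + (m - p) = m by omega]
  rw [mem_arc, ← key, dd_cast_add i (show m - p < n by omega)]
  omega

end AdmAux

namespace AdmAux

variable {n : ℕ} [NeZero n] {T : Finset (Fin n × Fin n)}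

lemma nested (hT : IsAdmissible T) {i j k l x : Fin n} (h1 : (i,j) ∈ T) (h2 : (k,l) ∈ T)
    (hne : (i,j) ≠ (k,l)) (hx1 : x ∈ arcSet i j) (hx2 : x ∈ arcSet k l) :
    arcSet i j ⊆ arcSet k l ∨ arcSet k l ⊆ arcSet i j :=
  ((hT.2 (i,j) h1 (k,l) h2 hne).1 ⟨x, hx1, hx2⟩)

lemma disj (hT : IsAdmissible T) {i j k l : Fin n} (h1 : (i,j) ∈ T) (h2 : (k,l) ∈ T)
    (hne : (i,j) ≠ (k,l)) (h : ∀ x, x ∈ arcSet i j → x ∈ arcSet k l → False) :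
    j ≠ k ∧ l ≠ i := by
  refine (hT.2 (i,j) h1 (k,l) h2 hne).2 ?_
  ext x
  simp only [Set.mem_inter_iff, Set.mem_empty_iff_false, iff_false, not_and]
  exact fun ha hb => (h x ha hb).elim

section Step

variable (hn : 3 ≤ n) (hT : IsAdmissible T) {a b : Fin n} (hab : (a,b) ∈ T)
  (Hmax : ∀ p ∈ T, dd p.1 p.2 ≤ dd a b)

include hn hT hab Hmax

lemma no_pair_from_b {j : Fin n} (h : (b, j) ∈ T) : False := by
  have hab2 : a ≠ b := hT.1 _ hab
  have hbj : b ≠ j := hT.1 _ h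
  have hne : (a,b) ≠ (b,j) := fun he => hab2 (congrArg Prod.fst he)
  by_cases hx : ∃ x, x ∈ arcSet a b ∧ x ∈ arcSet b j
  · obtain ⟨x, hx1, hx2⟩ := hx
    rcases nested hT hab h hne hx1 hx2 with hs | hs
    · have h1 := arc_sub (show (1:ℕ) < n by omega) hab2 hs
      have h2 := dd_comm_n hab2
      have h3 := dd_lt b j
      omega
    · have h1 := arc_sub (show (1:ℕ) < n by omega) hbj hs
      have h2 : dd b j ≠ 0 := fun h' => hbj (dd_eq_zero.mp h')
      omega
  · push_neg at hx
    exact absurd rfl (disj hT hab h hne (fun x h1 h2 => hx x h1 h2)).1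

lemma step_bound {i j : Fin n} (hij : (i,j) ∈ T) (hne : (i,j) ≠ (a,b))
    (hreach : dd a i ≤ dd a b ∨ dd a j ≤ dd a b) :
    dd a i + dd i j ≤ dd a b := by
  have hab2 : a ≠ b := hT.1 _ hab
  have hij2 : i ≠ j := hT.1 _ hij
  have habn : dd a b < n := dd_lt a b
  have hijn : dd i j < n := dd_lt i j
  have hone : (1:ℕ) < n := by omega
  have hij1 : 1 ≤ dd i j := Nat.pos_of_ne_zero (fun h' => hij2 (dd_eq_zero.mp h'))
  have closer : (∃ x, x ∈ arcSet i j ∧ x ∈ arcSet a b) → dd a i + dd i j ≤ dd a b := by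
    rintro ⟨x, hx1, hx2⟩
    rcases nested hT hij hab hne hx1 hx2 with hs | hs
    · exact arc_sub hone hij2 hs
    · have h1 := arc_sub hone hab2 hs
      have h2 : dd i j ≤ dd a b := Hmax (i,j) hij
      have h3 : i = a := dd_eq_zero.mp (by omega)
      subst h3
      have h5 : dd i j = dd i b := by have := dd_self i; omega
      exact absurd (by rw [show j = b from dd_right_inj h5]) hne
  rcases hreach with h1 | h1
  · rcases lt_or_eq_of_le h1 with h1' | h1'
    · exact closer ⟨i, self_mem_arc hij2, mem_arc.mpr h1'⟩
    · have hb : i = b := dd_right_inj h1'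
      rw [hb] at hij
      exact absurd hij (fun h => no_pair_from_b hn hT hab Hmax h)
  · by_cases h0 : dd a j = 0
    · have hja : a = j := dd_eq_zero.mp h0
      subst hja
      by_cases hx : ∃ x, x ∈ arcSet i a ∧ x ∈ arcSet a b
      · obtain ⟨x, hx1, hx2⟩ := hx
        rcases nested hT hij hab hne hx1 hx2 with hs | hs
        · have h2 := arc_sub hone hij2 hs
          have h3 := dd_comm_n (show i ≠ a from hij2)
          omega
        · have h2 := arc_sub hone hab2 hs
          have h3 : dd a b ≠ 0 := fun h' => hab2 (dd_eq_zero.mp h')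
          omega
      · push_neg at hx
        exact absurd rfl (disj hT hij hab hne fun x ha hb => hx x ha hb).1
    · have hj1 : 1 ≤ dd a j := by omega
      have ecast : ∀ m : ℕ, 1 ≤ m → ((m - 1 : ℕ) : Fin n) + 1 = ((m : ℕ) : Fin n) := by
        intro m hm
        rw [show (1 : Fin n) = ((1:ℕ) : Fin n) by push_cast; rfl, ← Nat.cast_add,
          Nat.sub_add_cancel hm]
      have hzj : (a + ((dd a j - 1 : ℕ) : Fin n)) + 1 = j := by
        rw [add_assoc, ecast _ hj1, add_dd]
      have hizj : (i + ((dd i j - 1 : ℕ) : Fin n)) + 1 = j := by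
        rw [add_assoc, ecast _ hij1, add_dd]
      have hz : a + ((dd a j - 1 : ℕ) : Fin n) = i + ((dd i j - 1 : ℕ) : Fin n) :=
        add_right_cancel (hzj.trans hizj.symm)
      refine closer ⟨a + ((dd a j - 1 : ℕ) : Fin n), ?_, ?_⟩
      · rw [mem_arc, hz, dd_cast_add i (show dd i j - 1 < n by omega)]
        omega
      · rw [mem_arc, dd_cast_add a (show dd a j - 1 < n by omega)]
        omega

end Step

end AdmAux

namespace AdmAux

variable {n : ℕ} [NeZero n]

def graphT (T : Finset (Fin n × Fin n)) : SimpleGraph (Fin n) :=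
  { Adj := fun u v => u ≠ v ∧ ((u, v) ∈ T ∨ (v, u) ∈ T)
    symm := ⟨fun u v h => ⟨h.1.symm, h.2.symm⟩⟩
    loopless := ⟨fun u h => h.1 rfl⟩ }

section Walks

variable {T : Finset (Fin n × Fin n)} (hn : 3 ≤ n) (hT : IsAdmissible T) {a b : Fin n}
  (hab : (a,b) ∈ T) (Hmax : ∀ p ∈ T, dd p.1 p.2 ≤ dd a b)

include hn hT hab Hmax

lemma step_pair {x y : Fin n} (hadj : (graphT T).Adj x y) (hnot : s(x,y) ≠ s(a,b))
    (hx : dd a x ≤ dd a b) :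
    ∃ i j, (i,j) ∈ T ∧ (i,j) ≠ (a,b) ∧ dd a i + dd i j ≤ dd a b ∧
      dd a j = dd a i + dd i j ∧ ((x = i ∧ y = j) ∨ (x = j ∧ y = i)) := by
  have habn : dd a b < n := dd_lt a b
  rcases hadj.2 with hp | hp
  · have hne : (x,y) ≠ (a,b) := by
      intro he; apply hnot; rw [Prod.mk.injEq] at he; rw [he.1, he.2]
    have hb := step_bound hn hT hab Hmax hp hne (Or.inl hx)
    exact ⟨x, y, hp, hne, hb, dd_add (by omega), Or.inl ⟨rfl, rfl⟩⟩
  · have hne : (y,x) ≠ (a,b) := by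
      intro he; apply hnot; rw [Prod.mk.injEq] at he
      rw [he.1, he.2, Sym2.eq_swap]
    have hb := step_bound hn hT hab Hmax hp hne (Or.inr hx)
    exact ⟨y, x, hp, hne, hb, dd_add (by omega), Or.inr ⟨rfl, rfl⟩⟩

lemma walk_cover {x z : Fin n} (W : (graphT T).Walk x z) (hW : s(a,b) ∉ W.edges)
    (hx : dd a x ≤ dd a b) :
    dd a z ≤ dd a b ∧ ∀ m, (dd a x ≤ m ∧ m < dd a z ∨ dd a z ≤ m ∧ m < dd a x) →
      ∃ i j, (i,j) ∈ T ∧ (i,j) ≠ (a,b) ∧ dd a i + dd i j ≤ dd a b ∧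
        dd a i ≤ m ∧ m < dd a i + dd i j := by
  induction W with
  | nil => exact ⟨hx, fun m hm => by omega⟩
  | @cons u v w hadj W ih =>
    rw [SimpleGraph.Walk.edges_cons, List.mem_cons] at hW
    push_neg at hW
    obtain ⟨hW1, hW2⟩ := hW
    obtain ⟨i, j, hijT, hijne, hlin, hdaj, hor⟩ :=
      step_pair hn hT hab Hmax hadj (fun h => hW1 h.symm) hx
    have hv : dd a v ≤ dd a b := by
      rcases hor with ⟨h1, h2⟩ | ⟨h1, h2⟩ <;> subst h2 <;> omega
    obtain ⟨hz, hcov⟩ := ih hW2 hv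
    refine ⟨hz, fun m hm => ?_⟩
    by_cases hmI : dd a i ≤ m ∧ m < dd a i + dd i j
    · exact ⟨i, j, hijT, hijne, hlin, hmI.1, hmI.2⟩
    · push_neg at hmI
      apply hcov m
      rcases hor with ⟨h1, h2⟩ | ⟨h1, h2⟩ <;> subst h1 <;> subst h2 <;> omega

lemma no_walk (W : (graphT T).Walk a b) (hW : s(a,b) ∉ W.edges) : False := by
  classical
  have hab2 : a ≠ b := hT.1 _ hab
  have habn : dd a b < n := dd_lt a b
  have hl1 : 1 ≤ dd a b := Nat.pos_of_ne_zero fun h' => hab2 (dd_eq_zero.mp h')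
  have haa : dd a a = 0 := dd_self a
  obtain ⟨_, hcov⟩ := walk_cover hn hT hab Hmax W hW (by omega)
  have hcov' : ∀ m, m < dd a b → ∃ i j, (i,j) ∈ T ∧ (i,j) ≠ (a,b) ∧
      dd a i + dd i j ≤ dd a b ∧ dd a i ≤ m ∧ m < dd a i + dd i j :=
    fun m hm => hcov m (by omega)
  have hPex : ∃ m : ℕ, ∃ i : Fin n,
      (i, b) ∈ T ∧ i ≠ a ∧ dd a i = m ∧ dd a i + dd i b = dd a b := by
    obtain ⟨i, j, h1, h2, h3, h4, h5⟩ := hcov' (dd a b - 1) (by omega)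
    have he : dd a i + dd i j = dd a b := by omega
    have hj : dd a j = dd a b := by rw [dd_add (show dd a i + dd i j < n by omega), he]
    have hjb : j = b := dd_right_inj hj
    subst hjb
    refine ⟨dd a i, i, h1, fun h => h2 (by rw [h]), rfl, he⟩
  obtain ⟨i₀, hi₀T, hi₀ne, hi₀m, hi₀sum⟩ := Nat.find_spec hPex
  set m₀ := Nat.find hPex with hm₀def
  have hmin : ∀ k, k < m₀ → ¬ (∃ i : Fin n,
      (i, b) ∈ T ∧ i ≠ a ∧ dd a i = k ∧ dd a i + dd i b = dd a b) :=
    fun k hk => Nat.find_min hPex hk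
  have hm₀pos : 0 < m₀ := by
    rcases Nat.eq_zero_or_pos m₀ with h | h
    · exact absurd (dd_eq_zero.mp (by omega)).symm hi₀ne
    · exact h
  have hiw : i₀ ≠ b := hT.1 _ hi₀T
  have hi₀b1 : 1 ≤ dd i₀ b := Nat.pos_of_ne_zero fun h' => hiw (dd_eq_zero.mp h')
  have hm₀lt : m₀ < dd a b := by omega
  obtain ⟨u, w, huwT, huwne, hlin, hc1, hc2⟩ := hcov' (m₀ - 1) (by omega)
  have hune : u ≠ w := hT.1 _ huwT
  have hpw : dd a w = dd a u + dd u w := dd_add (by omega)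
  have hi₀a : a + ((m₀ : ℕ) : Fin n) = i₀ := by rw [← hi₀m]; exact add_dd a i₀
  have huwne2 : (u,w) ≠ (i₀,b) := by
    intro he
    rw [Prod.mk.injEq] at he
    have : dd a u = m₀ := by rw [he.1, hi₀m]
    omega
  by_cases hcase : m₀ < dd a u + dd u w
  · have hxmem : i₀ ∈ arcSet u w := by
      rw [← hi₀a]; exact coord_mem (by omega) hcase (by omega)
    have hxmem2 : i₀ ∈ arcSet i₀ b := self_mem_arc hiw
    rcases nested hT huwT hi₀T huwne2 hxmem hxmem2 with hs | hs
    · have hu : u ∈ arcSet i₀ b := hs (self_mem_arc hune)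
      rw [mem_arc] at hu
      have he2 : dd a u = dd a i₀ + dd i₀ u := dd_add (by omega)
      omega
    · have h1 := arc_sub (show (1:ℕ) < n by omega) hiw hs
      have h2 : dd a i₀ = dd a u + dd u i₀ := dd_add (by omega)
      have h3 : dd a w = dd a b := by omega
      have hwb : w = b := dd_right_inj h3
      subst hwb
      exact hmin (dd a u) (by omega)
        ⟨u, huwT, fun h => huwne (by rw [h]), rfl, by omega⟩
  · have hw0 : dd a w = m₀ := by omega
    have hwi₀ : w = i₀ := dd_right_inj (by rw [hw0, hi₀m])
    have hdisj : ∀ x, x ∈ arcSet u w → x ∈ arcSet i₀ b → False := by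
      intro x hx1 hx2
      have e1 : dd a x = dd a u + dd u x := mem_coord (by omega) hx1
      have e2 : dd a x = dd a i₀ + dd i₀ x := mem_coord (by omega) hx2
      rw [mem_arc] at hx1 hx2
      omega
    exact (disj hT huwT hi₀T huwne2 hdisj).1 hwi₀

end Walks

theorem acyclic_aux (hn : 3 ≤ n) : ∀ N (T : Finset (Fin n × Fin n)), T.card ≤ N →
    IsAdmissible T → (graphT T).IsAcyclic := by
  intro N
  induction N with
  | zero =>
    intro T hcard hT v c hc
    have hTe : T = ∅ := Finset.card_eq_zero.mp (le_antisymm hcard (Nat.zero_le _))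
    subst hTe
    cases c with
    | nil => exact hc.ne_nil rfl
    | cons hadj p => rcases hadj.2 with h | h <;> exact absurd h (Finset.notMem_empty _)
  | succ N ih =>
    intro T hcard hT
    rcases Finset.eq_empty_or_nonempty T with rfl | hne
    · intro v c hc
      cases c with
      | nil => exact hc.ne_nil rfl
      | cons hadj p => rcases hadj.2 with h | h <;> exact absurd h (Finset.notMem_empty _)
    · obtain ⟨p₀, hp₀, Hmax⟩ := Finset.exists_max_image T (fun p => dd p.1 p.2) hne
      obtain ⟨a, b⟩ := p₀
      have Hmax' : ∀ p ∈ T, dd p.1 p.2 ≤ dd a b := Hmax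
      have hadjab : (graphT T).Adj a b := ⟨hT.1 _ hp₀, Or.inl hp₀⟩
      have hbr : (graphT T).IsBridge s(a,b) := by
        rw [SimpleGraph.isBridge_iff_adj_and_forall_walk_mem_edges]
        refine fun W => ?_
        by_contra hWe
        exact no_walk hn hT hp₀ Hmax' W hWe
      intro v c hc
      have hnc : s(a,b) ∉ c.edges :=
        (SimpleGraph.isBridge_iff_forall_cycle_notMem hadjab).mp hbr c hc
      have hT'adm : IsAdmissible (T.erase (a,b)) :=
        ⟨fun p hp => hT.1 p (Finset.erase_subset _ _ hp),
          fun p hp q hq hne' =>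
            hT.2 p (Finset.erase_subset _ _ hp) q (Finset.erase_subset _ _ hq) hne'⟩
      have hcard' : (T.erase (a,b)).card ≤ N := by
        have := Finset.card_erase_of_mem hp₀
        have := Finset.card_pos.mpr hne
        omega
      have hedge : ∀ e, e ∈ c.edges → e ∈ (graphT (T.erase (a,b))).edgeSet := by
        intro e he
        have he2 : e ∈ (graphT T).edgeSet := c.edges_subset_edgeSet he
        have hene : e ≠ s(a,b) := fun h => hnc (h ▸ he)
        revert he2 hene
        induction e using Sym2.ind with
        | _ x y =>
          intro he2 hene
          rw [SimpleGraph.mem_edgeSet] at he2 ⊢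
          refine ⟨he2.1, ?_⟩
          rcases he2.2 with h | h
          · exact Or.inl (Finset.mem_erase.mpr
              ⟨fun hh => hene (by rw [Prod.mk.injEq] at hh; rw [hh.1, hh.2]), h⟩)
          · exact Or.inr (Finset.mem_erase.mpr
              ⟨fun hh => hene (by rw [Prod.mk.injEq] at hh; rw [hh.1, hh.2, Sym2.eq_swap]), h⟩)
      exact ih (T.erase (a,b)) hcard' hT'adm
        (c.transfer (graphT (T.erase (a,b))) hedge) (hc.transfer hedge)

end AdmAux


/-- The unoriented graph `Γ_T` associated to an admissible family of arcs
has no cycles. -/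
theorem acyclic_of_admissible (n : ℕ) (hn : 3 ≤ n)
    (T : Finset (Fin n × Fin n)) (hT : IsAdmissible T) :
    SimpleGraph.IsAcyclic
      { Adj := fun u v => u ≠ v ∧ ((u, v) ∈ T ∨ (v, u) ∈ T)
        symm := ⟨fun u v h => ⟨h.1.symm, h.2.symm⟩⟩
        loopless := ⟨fun u h => h.1 rfl⟩ } := by
  haveI : NeZero n := ⟨by omega⟩
  exact AdmAux.acyclic_aux hn T.card T le_rfl hT
end

section
/- Let n ≥ 3 and let T be an admissible family of ordered pairs on Fin n. Then the set of sources s(T) = {i : (i,j) ∈ T for some j} and the set of sinks t(T) = {j : (i,j) ∈ T for some i} are disjoint; that is, no element of Fin n occurs both as a first coordinate of some pair of T and as a second coordinate of some pair of T. -/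
lemma arc_self {n : ℕ} {i j : Fin (n+1)} (h : i ≠ j) : i ∈ arcSet i j := by
  simp only [arcSet, Set.mem_setOf_eq, sub_self, Fin.val_zero]
  have hne : j - i ≠ 0 := fun hz => h (by rwa [sub_eq_zero, eq_comm] at hz)
  exact Nat.pos_of_ne_zero (fun hz => hne (Fin.ext (by simpa using hz)))

lemma arc_snd_not_mem {n : ℕ} (i j : Fin n) : j ∉ arcSet i j := by
  simp [arcSet]

lemma arc_pred_mem {n : ℕ} {i j : Fin (n+1)} (h : i ≠ j) : j - 1 ∈ arcSet i j := by
  simp only [arcSet, Set.mem_setOf_eq]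
  have heq : j - 1 - i = (j - i) - 1 := by abel
  rw [heq]
  have hne : j - i ≠ 0 := fun hz => h (by rwa [sub_eq_zero, eq_comm] at hz)
  have hv : ((j - i : Fin (n+1)) : ℕ) ≠ 0 := fun hz => hne (Fin.ext (by simpa using hz))
  rw [Fin.coe_sub_one]
  rw [if_neg hne]
  omega

lemma arc_pred_not_mem {n : ℕ} (i j : Fin (n+1)) : i - 1 ∉ arcSet i j := by
  simp only [arcSet, Set.mem_setOf_eq]
  have heq : i - 1 - i = -1 := by abel
  rw [heq, Fin.coe_neg_one]
  have := (j - i).isLt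
  omega

/-- For an admissible family of arcs, the set of sources and the set of sinks
are disjoint: no vertex is at once a first coordinate of some pair of `T`
and a second coordinate of some pair of `T`. -/
theorem sources_sinks_disjoint (n : ℕ) (hn : 3 ≤ n)
    (T : Finset (Fin n × Fin n)) (hT : IsAdmissible T) :
    Disjoint (T.image Prod.fst) (T.image Prod.snd) := by
  obtain ⟨m, rfl⟩ : ∃ m, n = m + 1 := ⟨n - 1, by omega⟩
  rw [Finset.disjoint_left]
  rintro v hv hv'
  obtain ⟨p, hp, hp1⟩ := Finset.mem_image.mp hv
  obtain ⟨q, hq, hq2⟩ := Finset.mem_image.mp hv'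
  have hpq : p ≠ q := by
    rintro rfl
    exact hT.1 p hp (hp1.trans hq2.symm)
  obtain ⟨hnest, hdisj⟩ := hT.2 p hp q hq hpq
  have hp12 := hT.1 p hp
  have hq12 := hT.1 q hq
  by_cases hE : arcSet p.1 p.2 ∩ arcSet q.1 q.2 = ∅
  · exact (hdisj hE).2 (hq2.trans hp1.symm)
  · rcases hnest (Set.nonempty_iff_ne_empty.mpr hE) with h | h
    · have h1 : p.1 ∈ arcSet p.1 p.2 := arc_self hp12
      have : p.1 ∉ arcSet q.1 q.2 := by rw [hp1, ← hq2]; exact arc_snd_not_mem _ _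
      exact this (h h1)
    · have h1 : q.2 - 1 ∈ arcSet q.1 q.2 := arc_pred_mem hq12
      have : q.2 - 1 ∉ arcSet p.1 p.2 := by rw [hq2, ← hp1]; exact arc_pred_not_mem _ _
      exact this (h h1)
end

section
/- Let n ≥ 3 and let T₁ and T₂ be admissible families of ordered pairs on Fin n. Suppose α, β : Fin n × Fin n → ℝ satisfy: α p > 0 for every p ∈ T₁; β p > 0 for every p ∈ T₂; ∑_{p ∈ T₁} α p = 1 = ∑_{p ∈ T₂} β p; and ∑_{(i,j) ∈ T₁} α (i,j) • (e_i − e_j) = ∑_{(i,j) ∈ T₂} β (i,j) • (e_i − e_j) in ℝⁿ. Then T₁ = T₂ and α p = β p for every p ∈ T₁. -/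
namespace ArcAux

lemma sub_val {n : ℕ} (i x : Fin n) :
    ((x - i : Fin n) : ℕ) = if i.val ≤ x.val then x.val - i.val else x.val + n - i.val := by
  have hi := i.isLt; have hx := x.isLt
  rw [Fin.sub_def]
  simp only
  split
  · next h => rw [Nat.mod_eq_sub_mod (by omega), Nat.mod_eq_of_lt (by omega)]; omega
  · rw [Nat.mod_eq_of_lt (by omega)]; omega

abbrev dd {n : ℕ} (i j : Fin n) : ℕ := ((j - i : Fin n) : ℕ)

lemma dd_lt {n : ℕ} (i j : Fin n) : dd i j < n := (j - i).isLt

lemma dd_eq_zero_iff {n : ℕ} {i j : Fin n} : dd i j = 0 ↔ i = j := by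
  have hi := i.isLt; have hj := j.isLt
  rw [Fin.ext_iff]; unfold dd; rw [sub_val]; split <;> omega

lemma dd_add {n : ℕ} [NeZero n] (a b c : Fin n) :
    dd a b + dd b c = dd a c ∨ dd a b + dd b c = dd a c + n := by
  have h : (b - a) + (c - b) = c - a := by abel
  have hv : ((b - a).val + (c - b).val) % n = (c - a).val := by
    rw [← Fin.val_add, h]
  have h1 := dd_lt a b; have h2 := dd_lt b c; have h3 := dd_lt a c
  unfold dd at *
  rcases Nat.lt_or_ge ((b - a).val + (c - b).val) n with hlt | hge
  · left; rwa [Nat.mod_eq_of_lt hlt] at hv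
  · right; rw [Nat.mod_eq_sub_mod hge, Nat.mod_eq_of_lt (by omega)] at hv; omega

lemma dd_inj_right {n : ℕ} [NeZero n] {i y j : Fin n} (h : dd i y = dd i j) : y = j := by
  have : y - i = j - i := Fin.val_injective h
  exact sub_left_injective this

lemma dd_inj_left {n : ℕ} [NeZero n] {i j x : Fin n} (h : dd i x = dd j x) : i = j := by
  have : x - i = x - j := Fin.val_injective h
  exact sub_right_injective this

lemma dd_pred {n : ℕ} [NeZero n] (hn : 3 ≤ n) (x : Fin n) : dd (x - 1) x = 1 := by
  have h : x - (x - 1) = 1 := by abel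
  unfold dd; rw [h, Fin.val_one', Nat.mod_eq_of_lt (by omega)]

lemma dd_succ {n : ℕ} [NeZero n] (hn : 3 ≤ n) (x : Fin n) : dd x (x + 1) = 1 := by
  have h : (x + 1) - x = 1 := by abel
  unfold dd; rw [h, Fin.val_one', Nat.mod_eq_of_lt (by omega)]

lemma dd_self {n : ℕ} [NeZero n] (x : Fin n) : dd x x = 0 := by
  unfold dd; rw [sub_self]; rfl

lemma left_mem {n : ℕ} [NeZero n] {i j : Fin n} (hij : i ≠ j) : dd i i < dd i j := by
  have h0 := dd_self i
  have : dd i j ≠ 0 := fun h => hij (dd_eq_zero_iff.mp h)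
  omega

lemma not_right_mem {n : ℕ} {i j : Fin n} : ¬ dd i j < dd i j := lt_irrefl _

lemma pred_mem {n : ℕ} [NeZero n] (hn : 3 ≤ n) {i j x : Fin n}
    (h : dd i x < dd i j) (hxi : x ≠ i) : dd i (x - 1) < dd i j := by
  have h1 := dd_add i (x - 1) x
  have h2 := dd_pred hn x
  have h3 := dd_lt i (x - 1)
  have h4 := dd_lt i j
  have hx0 : dd i x ≠ 0 := fun h0 => hxi (dd_eq_zero_iff.mp h0).symm
  omega

lemma succ_mem {n : ℕ} [NeZero n] (hn : 3 ≤ n) {i j x : Fin n}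
    (h : dd i x < dd i j) (hne : x + 1 ≠ j) : dd i (x + 1) < dd i j := by
  have h1 := dd_add i x (x + 1)
  have h2 := dd_succ hn x
  have h3 := dd_lt i (x + 1)
  have h4 := dd_lt i j
  have h5 : dd i (x + 1) ≠ dd i j := fun hc => hne (dd_inj_right hc)
  omega

lemma last_mem {n : ℕ} [NeZero n] (hn : 3 ≤ n) {i j : Fin n} (hij : i ≠ j) :
    dd i (j - 1) < dd i j := by
  have h1 := dd_add i (j - 1) j
  have h2 := dd_pred hn j
  have h3 := dd_lt i (j - 1)
  have h4 := dd_lt i j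
  have hx0 : dd i j ≠ 0 := fun h => hij (dd_eq_zero_iff.mp h)
  omega

lemma pred_left_not_mem {n : ℕ} [NeZero n] (hn : 3 ≤ n) {i j : Fin n} :
    ¬ dd i (i - 1) < dd i j := by
  have h1 := dd_add i (i - 1) i
  have h2 := dd_pred hn i
  have h3 := dd_self i
  have h4 := dd_lt i j
  omega

lemma eq_left_iff {n : ℕ} [NeZero n] (hn : 3 ≤ n) {i j y : Fin n} (hij : i ≠ j) :
    (dd i y < dd i j ∧ ¬ dd i (y - 1) < dd i j) ↔ y = i := by
  constructor
  · rintro ⟨h1, h2⟩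
    by_contra hne
    exact h2 (pred_mem hn h1 hne)
  · rintro rfl
    exact ⟨left_mem hij, pred_left_not_mem hn⟩

lemma eq_right_iff {n : ℕ} [NeZero n] (hn : 3 ≤ n) {i j y : Fin n} (hij : i ≠ j) :
    (¬ dd i y < dd i j ∧ dd i (y - 1) < dd i j) ↔ y = j := by
  constructor
  · rintro ⟨h1, h2⟩
    have hyi : y ≠ i := by rintro rfl; exact h1 (left_mem hij)
    have hmm : dd i y ≠ 0 := fun h0 => hyi (dd_eq_zero_iff.mp h0).symm
    have ha := dd_add i (y - 1) y
    have hp := dd_pred hn y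
    have l1 := dd_lt i (y - 1); have l2 := dd_lt i j; have l3 := dd_lt i y
    have : dd i y = dd i j := by omega
    exact dd_inj_right this
  · rintro rfl
    exact ⟨not_right_mem, last_mem hn hij⟩

lemma subset_strong {n : ℕ} [NeZero n] {i j k l : Fin n} (hkl : k ≠ l)
    (hsub : ∀ x : Fin n, dd k x < dd k l → dd i x < dd i j) :
    dd i k + dd k l ≤ dd i j := by
  have h1 : dd i k < dd i j := hsub k (left_mem hkl)
  by_contra hc
  push_neg at hc
  have h2 := dd_add i k j
  have l1 := dd_lt i j; have l2 := dd_lt k j; have l3 := dd_lt k l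
  rcases h2 with h2 | h2
  · have : dd k j < dd k l := by omega
    have := hsub j this
    omega
  · omega

lemma between_subset {n : ℕ} [NeZero n] {i j x' : Fin n} (hx : dd i x' < dd i j) :
    ∀ x, dd x' x < dd x' j → dd i x < dd i j := by
  intro x h
  have hA := dd_add i x' j
  have hB := dd_add i x' x
  have l1 := dd_lt x' j; have l2 := dd_lt i x; have l3 := dd_lt i j
  omega

lemma mem_arc_iff {n : ℕ} {i j x : Fin n} : x ∈ arcSet i j ↔ dd i x < dd i j := Iff.rfl

lemma adm_cases {n : ℕ} {T : Finset (Fin n × Fin n)} (hT : IsAdmissible T)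
    {p q : Fin n × Fin n} (hp : p ∈ T) (hq : q ∈ T) (hne : p ≠ q) :
    ((∀ x, dd p.1 x < dd p.1 p.2 → dd q.1 x < dd q.1 q.2) ∨
     (∀ x, dd q.1 x < dd q.1 q.2 → dd p.1 x < dd p.1 p.2)) ∨
    ((∀ x : Fin n, ¬(dd p.1 x < dd p.1 p.2 ∧ dd q.1 x < dd q.1 q.2)) ∧ p.2 ≠ q.1 ∧ q.2 ≠ p.1) := by
  by_cases hcap : (arcSet p.1 p.2 ∩ arcSet q.1 q.2).Nonempty
  · left
    rcases (hT.2 p hp q hq hne).1 hcap with hsub | hsub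
    · exact Or.inl fun x hx => hsub hx
    · exact Or.inr fun x hx => hsub hx
  · right
    have hemp : arcSet p.1 p.2 ∩ arcSet q.1 q.2 = ∅ := Set.not_nonempty_iff_eq_empty.mp hcap
    exact ⟨fun x hx => hcap ⟨x, hx.1, hx.2⟩, (hT.2 p hp q hq hne).2 hemp⟩

noncomputable def cov {n : ℕ} (T : Finset (Fin n × Fin n)) (α : Fin n × Fin n → ℝ) (x : Fin n) : ℝ :=
  ∑ p ∈ T, if dd p.1 x < dd p.1 p.2 then α p else 0

lemma cov_nonneg {n : ℕ} {T : Finset (Fin n × Fin n)} {α : Fin n × Fin n → ℝ}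
    (hα : ∀ p ∈ T, 0 < α p) (x : Fin n) : 0 ≤ cov T α x := by
  apply Finset.sum_nonneg
  intro p hp
  split
  · exact (hα p hp).le
  · exact le_refl _

lemma adm_subset {n : ℕ} {T S : Finset (Fin n × Fin n)} (hT : IsAdmissible T) (hS : S ⊆ T) :
    IsAdmissible S :=
  ⟨fun p hp => hT.1 p (hS hp), fun p hp q hq => hT.2 p (hS hp) q (hS hq)⟩

/-- Key covering lemma: if `y` is just outside the arc of `A` (either `A.1 - 1` or `A.2`),
then any arc of `T` containing `y` contains all of `A`'s arc. -/
lemma cover_up {n : ℕ} [NeZero n] (hn : 3 ≤ n) {T : Finset (Fin n × Fin n)}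
    (hT : IsAdmissible T) {A : Fin n × Fin n} (hA : A ∈ T) {y : Fin n}
    (hy : y = A.1 - 1 ∨ y = A.2) :
    ∀ p ∈ T, dd p.1 y < dd p.1 p.2 → ∀ x, dd A.1 x < dd A.1 A.2 → dd p.1 x < dd p.1 p.2 := by
  intro p hp hyp x hx
  have hA12 : A.1 ≠ A.2 := hT.1 A hA
  have hyA : ¬ dd A.1 y < dd A.1 A.2 := by
    rcases hy with rfl | rfl
    · exact pred_left_not_mem hn
    · exact not_right_mem
  have hne : p ≠ A := by rintro rfl; exact hyA hyp
  rcases adm_cases hT hp hA hne with (hsub | hsub) | ⟨hdisj, hd1, hd2⟩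
  · exact absurd (hsub y hyp) hyA
  · exact hsub x hx
  · exfalso
    rcases hy with rfl | rfl
    · have h1 : (A.1 - 1) + 1 = A.1 := by abel
      have hne2 : (A.1 - 1) + 1 ≠ p.2 := by rw [h1]; exact fun h => hd1 h.symm
      have h2 := succ_mem hn hyp hne2
      rw [h1] at h2
      exact hdisj A.1 ⟨h2, left_mem hA12⟩
    · have h2 := pred_mem hn hyp hd2
      exact hdisj (A.2 - 1) ⟨h2, last_mem hn hA12⟩

/-- The coverage drops strictly just outside an arc. -/
lemma cov_drop {n : ℕ} [NeZero n] (hn : 3 ≤ n) {T : Finset (Fin n × Fin n)}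
    (hT : IsAdmissible T) {α : Fin n × Fin n → ℝ} (hα : ∀ p ∈ T, 0 < α p)
    {A : Fin n × Fin n} (hA : A ∈ T) {x' y : Fin n} (hx' : dd A.1 x' < dd A.1 A.2)
    (hy : y = A.1 - 1 ∨ y = A.2) : cov T α y < cov T α x' := by
  have hyA : ¬ dd A.1 y < dd A.1 A.2 := by
    rcases hy with rfl | rfl
    · exact pred_left_not_mem hn
    · exact not_right_mem
  apply Finset.sum_lt_sum
  · intro p hp
    by_cases hc : dd p.1 y < dd p.1 p.2
    · rw [if_pos hc, if_pos (cover_up hn hT hA hy p hp hc x' hx')]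
    · rw [if_neg hc]
      split
      · exact (hα p hp).le
      · exact le_refl _
  · exact ⟨A, hA, by rw [if_neg hyA, if_pos hx']; exact hα A hA⟩

/-- Coverage is constant (equal to the max) on an innermost arc through a maximizer. -/
lemma cov_const {n : ℕ} {T : Finset (Fin n × Fin n)} {α : Fin n × Fin n → ℝ}
    (hα : ∀ p ∈ T, 0 < α p) {A : Fin n × Fin n} {x' : Fin n}
    (hinner : ∀ p ∈ T, dd p.1 x' < dd p.1 p.2 → ∀ x, dd A.1 x < dd A.1 A.2 → dd p.1 x < dd p.1 p.2)
    (hmax : ∀ y, cov T α y ≤ cov T α x') :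
    ∀ x, dd A.1 x < dd A.1 A.2 → cov T α x = cov T α x' := by
  intro x hx
  refine le_antisymm (hmax x) (Finset.sum_le_sum ?_)
  intro p hp
  by_cases hc : dd p.1 x' < dd p.1 p.2
  · rw [if_pos hc, if_pos (hinner p hp hc x hx)]
  · rw [if_neg hc]
    split
    · exact (hα p hp).le
    · exact le_refl _

lemma exists_innermost {n : ℕ} [NeZero n] {T : Finset (Fin n × Fin n)}
    (hT : IsAdmissible T) (x' : Fin n) (hne : ∃ p ∈ T, dd p.1 x' < dd p.1 p.2) :
    ∃ A ∈ T, dd A.1 x' < dd A.1 A.2 ∧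
      ∀ p ∈ T, dd p.1 x' < dd p.1 p.2 → ∀ x, dd A.1 x < dd A.1 A.2 → dd p.1 x < dd p.1 p.2 := by
  classical
  obtain ⟨p₀, hp₀, hp₀x⟩ := hne
  have hSne : (T.filter (fun p => dd p.1 x' < dd p.1 p.2)).Nonempty :=
    ⟨p₀, Finset.mem_filter.mpr ⟨hp₀, hp₀x⟩⟩
  obtain ⟨A, hAS, hmin⟩ := Finset.exists_min_image _ (fun p => dd p.1 p.2) hSne
  rw [Finset.mem_filter] at hAS
  refine ⟨A, hAS.1, hAS.2, ?_⟩
  intro p hp hpx x hx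
  by_cases hpA : p = A
  · subst hpA; exact hx
  have hp12 : p.1 ≠ p.2 := hT.1 p hp
  rcases adm_cases hT hp hAS.1 hpA with (hsub | hsub) | ⟨hdisj, _, _⟩
  · have h9 := subset_strong hp12 hsub
    have hm := hmin p (Finset.mem_filter.mpr ⟨hp, hpx⟩)
    have h0 : dd A.1 p.1 = 0 := by omega
    have hp1 : A.1 = p.1 := dd_eq_zero_iff.mp h0
    have heqd : dd A.1 p.2 = dd A.1 A.2 := by
      have e1 : dd A.1 p.2 = dd p.1 p.2 := by rw [hp1]
      omega
    have hp2 : p.2 = A.2 := dd_inj_right heqd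
    exact absurd (Prod.ext hp1.symm hp2) hpA
  · exact hsub x hx
  · exact absurd ⟨hpx, hAS.2⟩ (hdisj x')

lemma exists_uncovered {n : ℕ} [NeZero n] (hn : 3 ≤ n) {T : Finset (Fin n × Fin n)}
    (hT : IsAdmissible T) : ∃ x : Fin n, ∀ p ∈ T, ¬ dd p.1 x < dd p.1 p.2 := by
  rcases T.eq_empty_or_nonempty with rfl | hTne
  · exact ⟨0, by simp⟩
  by_contra hcon
  push_neg at hcon
  obtain ⟨A, hA, hmaxd⟩ := Finset.exists_max_image T (fun p => dd p.1 p.2) hTne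
  obtain ⟨B, hB, hBx⟩ := hcon A.2
  have hA12 : A.1 ≠ A.2 := hT.1 A hA
  have hB12 : B.1 ≠ B.2 := hT.1 B hB
  have hBA : B ≠ A := by rintro rfl; exact not_right_mem hBx
  rcases adm_cases hT hB hA hBA with (hsub | hsub) | ⟨hdisj, hd1, hd2⟩
  · exact not_right_mem (hsub A.2 hBx)
  · have h9 := subset_strong hA12 hsub
    have hm := hmaxd B hB
    have h0 : dd B.1 A.1 = 0 := by omega
    have hB1 : B.1 = A.1 := dd_eq_zero_iff.mp h0
    have heqd : dd B.1 A.2 = dd B.1 B.2 := by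
      have e1 : dd B.1 A.2 = dd A.1 A.2 := by rw [hB1]
      omega
    have hB2 : A.2 = B.2 := dd_inj_right heqd
    exact hBA (Prod.ext hB1 hB2.symm)
  · have h2 := pred_mem hn hBx hd2
    exact hdisj (A.2 - 1) ⟨h2, last_mem hn hA12⟩
end ArcAux

namespace ArcAux

lemma endpointL {n : ℕ} [NeZero n] (hn : 3 ≤ n) {c : Fin n → ℝ} {x' iA jA iB : Fin n}
    (hxA : dd iA x' < dd iA jA)
    (hconstA : ∀ x, dd iA x < dd iA jA → c x = c x')
    (hdropB : c (iB - 1) < c x')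
    (hu : dd iB x' < dd iA x') : False := by
  have h1 := dd_add iA iB x'
  have h2 := dd_add iA (iB - 1) iB
  have h3 := dd_pred hn iB
  have l1 := dd_lt iA (iB - 1); have l2 := dd_lt iA iB
  have l3 := dd_lt iA x'; have l4 := dd_lt iA jA
  have hmem : dd iA (iB - 1) < dd iA jA := by omega
  have := hconstA _ hmem
  linarith

lemma endpointR {n : ℕ} [NeZero n] {c : Fin n → ℝ} {x' iB jB jA : Fin n}
    (hxB : dd iB x' < dd iB jB)
    (hconstB : ∀ x, dd iB x < dd iB jB → c x = c x')
    (hdropA : c jA < c x')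
    (hu : dd x' jA < dd x' jB) : False := by
  have h1 := between_subset hxB jA hu
  have := hconstB jA h1
  linarith

lemma cov_erase {n : ℕ} {T : Finset (Fin n × Fin n)} {γ : Fin n × Fin n → ℝ}
    {A : Fin n × Fin n} (hA : A ∈ T) (x : Fin n) :
    cov (T.erase A) γ x = cov T γ x - (if dd A.1 x < dd A.1 A.2 then γ A else 0) := by
  classical
  have h := Finset.add_sum_erase T (fun p => if dd p.1 x < dd p.1 p.2 then γ p else 0) hA
  unfold cov
  linarith [h]

lemma cov_update {n : ℕ} {T : Finset (Fin n × Fin n)} {α : Fin n × Fin n → ℝ}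
    {A : Fin n × Fin n} (hA : A ∈ T) (t : ℝ) (x : Fin n) :
    cov T (fun p => if p = A then t else α p) x
      = cov T α x - (if dd A.1 x < dd A.1 A.2 then α A - t else 0) := by
  classical
  have h1 := Finset.add_sum_erase T
    (fun p => if dd p.1 x < dd p.1 p.2 then (if p = A then t else α p) else 0) hA
  have h2 := Finset.add_sum_erase T (fun p => if dd p.1 x < dd p.1 p.2 then α p else 0) hA
  have h3 : ∑ p ∈ T.erase A, (if dd p.1 x < dd p.1 p.2 then (if p = A then t else α p) else 0)
          = ∑ p ∈ T.erase A, (if dd p.1 x < dd p.1 p.2 then α p else 0) := by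
    apply Finset.sum_congr rfl
    intro p hp
    simp [Finset.ne_of_mem_erase hp]
  unfold cov
  by_cases hc : dd A.1 x < dd A.1 A.2 <;> simp only [hc, if_true, if_false, if_pos, if_neg] at * <;>
    simp_all <;> linarith

end ArcAux

namespace ArcAux

lemma step3 {n : ℕ} (hn : 3 ≤ n) :
    ∀ N (T₁ T₂ : Finset (Fin n × Fin n)), T₁.card + T₂.card ≤ N →
    IsAdmissible T₁ → IsAdmissible T₂ →
    ∀ (α β : Fin n × Fin n → ℝ), (∀ p ∈ T₁, 0 < α p) → (∀ p ∈ T₂, 0 < β p) →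
    (∀ x, cov T₁ α x = cov T₂ β x) →
    T₁ = T₂ ∧ ∀ p ∈ T₁, α p = β p := by
  haveI : NeZero n := ⟨by omega⟩
  intro N
  induction N with
  | zero =>
      intro T₁ T₂ hcard hT₁ hT₂ α β hα hβ hcov
      have h1 : T₁ = ∅ := Finset.card_eq_zero.mp (by omega)
      have h2 : T₂ = ∅ := Finset.card_eq_zero.mp (by omega)
      subst h1; subst h2
      exact ⟨rfl, by simp⟩
  | succ N ih =>
      intro T₁ T₂ hcard hT₁ hT₂ α β hα hβ hcov
      rcases T₁.eq_empty_or_nonempty with rfl | hT1ne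
      · have hT2e : T₂ = ∅ := by
          by_contra h
          obtain ⟨p, hp⟩ := Finset.nonempty_of_ne_empty h
          have hpos : 0 < cov T₂ β p.1 := by
            apply Finset.sum_pos'
            · intro q hq; split
              · exact (hβ q hq).le
              · exact le_refl _
            · exact ⟨p, hp, by rw [if_pos (left_mem (hT₂.1 p hp))]; exact hβ p hp⟩
          have hz : cov (∅ : Finset (Fin n × Fin n)) α p.1 = 0 := by simp [cov]
          rw [← hcov p.1, hz] at hpos
          exact lt_irrefl _ hpos
        subst hT2e
        exact ⟨rfl, by simp⟩
      · haveI : Nonempty (Fin n) := ⟨0⟩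
        obtain ⟨x', -, hmax'⟩ :=
          Finset.exists_max_image Finset.univ (cov T₁ α) Finset.univ_nonempty
        have hmax : ∀ y, cov T₁ α y ≤ cov T₁ α x' := fun y => hmax' y (Finset.mem_univ y)
        obtain ⟨p₀, hp₀⟩ := hT1ne
        have hpos0 : 0 < cov T₁ α p₀.1 := by
          apply Finset.sum_pos'
          · intro q hq; split
            · exact (hα q hq).le
            · exact le_refl _
          · exact ⟨p₀, hp₀, by rw [if_pos (left_mem (hT₁.1 p₀ hp₀))]; exact hα p₀ hp₀⟩
        have hpos : 0 < cov T₁ α x' := lt_of_lt_of_le hpos0 (hmax _)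
        have hex1 : ∃ p ∈ T₁, dd p.1 x' < dd p.1 p.2 := by
          by_contra hc
          push_neg at hc
          have : cov T₁ α x' = 0 :=
            Finset.sum_eq_zero fun p hp => if_neg (not_lt.mpr (hc p hp))
          linarith
        have hex2 : ∃ p ∈ T₂, dd p.1 x' < dd p.1 p.2 := by
          by_contra hc
          push_neg at hc
          have : cov T₂ β x' = 0 :=
            Finset.sum_eq_zero fun p hp => if_neg (not_lt.mpr (hc p hp))
          rw [hcov x', this] at hpos
          exact lt_irrefl _ hpos
        obtain ⟨A, hA1, hAx, hinnerA⟩ := exists_innermost hT₁ x' hex1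
        obtain ⟨B, hB2, hBx, hinnerB⟩ := exists_innermost hT₂ x' hex2
        have hmax2 : ∀ y, cov T₂ β y ≤ cov T₂ β x' := fun y => by
          rw [← hcov, ← hcov]; exact hmax y
        have hconstA := cov_const hα hinnerA hmax
        have hconstB0 := cov_const hβ hinnerB hmax2
        have hconstB : ∀ x, dd B.1 x < dd B.1 B.2 → cov T₁ α x = cov T₁ α x' := fun x hx => by
          rw [hcov, hcov]; exact hconstB0 x hx
        have hdropA1 : cov T₁ α (A.1 - 1) < cov T₁ α x' :=
          cov_drop hn hT₁ hα hA1 hAx (Or.inl rfl)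
        have hdropA2 : cov T₁ α A.2 < cov T₁ α x' :=
          cov_drop hn hT₁ hα hA1 hAx (Or.inr rfl)
        have hdropB1 : cov T₁ α (B.1 - 1) < cov T₁ α x' := by
          rw [hcov, hcov]; exact cov_drop hn hT₂ hβ hB2 hBx (Or.inl rfl)
        have hdropB2 : cov T₁ α B.2 < cov T₁ α x' := by
          rw [hcov, hcov]; exact cov_drop hn hT₂ hβ hB2 hBx (Or.inr rfl)
        have hAB1 : A.1 = B.1 := by
          rcases lt_trichotomy (dd A.1 x') (dd B.1 x') with h | h | h
          · exact absurd (endpointL hn hBx hconstB hdropA1 h) (fun h => h)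
          · exact dd_inj_left h
          · exact absurd (endpointL hn hAx hconstA hdropB1 h) (fun h => h)
        have hAB2 : A.2 = B.2 := by
          rcases lt_trichotomy (dd x' A.2) (dd x' B.2) with h | h | h
          · exact absurd (endpointR hBx hconstB hdropA2 h) (fun h => h)
          · exact dd_inj_right h
          · exact absurd (endpointR hAx hconstA hdropB2 h) (fun h => h)
        have hABeq : A = B := Prod.ext hAB1 hAB2
        have hA2' : A ∈ T₂ := by rw [hABeq]; exact hB2
        clear hconstB0 hconstB hconstA hdropA1 hdropA2 hdropB1 hdropB2 hinnerA hinnerB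
        rcases lt_trichotomy (α A) (β A) with hw | hw | hw
        · exfalso
          set β' := fun p => if p = A then β A - α A else β p with hβ'def
          have hβ' : ∀ p ∈ T₂, 0 < β' p := by
            intro p hp
            by_cases hpA : p = A
            · subst hpA; simp only [hβ'def, if_pos rfl]; linarith
            · simp only [hβ'def, if_neg hpA]; exact hβ p hp
          have hcov' : ∀ x, cov (T₁.erase A) α x = cov T₂ β' x := by
            intro x
            rw [cov_erase hA1, cov_update hA2', ← hcov x]
            have e : β A - (β A - α A) = α A := by ring
            rw [e]
          have hcards : (T₁.erase A).card + T₂.card ≤ N := by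
            rw [Finset.card_erase_of_mem hA1]
            have := Finset.card_pos.mpr ⟨A, hA1⟩
            omega
          obtain ⟨hTe, -⟩ := ih (T₁.erase A) T₂ hcards
            (adm_subset hT₁ (Finset.erase_subset _ _)) hT₂ α β'
            (fun p hp => hα p (Finset.mem_of_mem_erase hp)) hβ' hcov'
          have : A ∈ T₁.erase A := by rw [hTe]; exact hA2'
          exact (Finset.mem_erase.mp this).1 rfl
        · -- equal weights: erase from both
          have hcov' : ∀ x, cov (T₁.erase A) α x = cov (T₂.erase A) β x := by
            intro x
            rw [cov_erase hA1, cov_erase hA2', hcov x, hw]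
          have hcards : (T₁.erase A).card + (T₂.erase A).card ≤ N := by
            rw [Finset.card_erase_of_mem hA1, Finset.card_erase_of_mem hA2']
            have := Finset.card_pos.mpr ⟨A, hA1⟩
            omega
          obtain ⟨hTe, hwe⟩ := ih (T₁.erase A) (T₂.erase A) hcards
            (adm_subset hT₁ (Finset.erase_subset _ _))
            (adm_subset hT₂ (Finset.erase_subset _ _)) α β
            (fun p hp => hα p (Finset.mem_of_mem_erase hp))
            (fun p hp => hβ p (Finset.mem_of_mem_erase hp)) hcov'
          constructor
          · rw [← Finset.insert_erase hA1, ← Finset.insert_erase hA2', hTe]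
          · intro p hp
            by_cases hpA : p = A
            · subst hpA; exact hw
            · exact hwe p (Finset.mem_erase.mpr ⟨hpA, hp⟩)
        · exfalso
          set α' := fun p => if p = A then α A - β A else α p with hα'def
          have hα' : ∀ p ∈ T₁, 0 < α' p := by
            intro p hp
            by_cases hpA : p = A
            · subst hpA; simp only [hα'def, if_pos rfl]; linarith
            · simp only [hα'def, if_neg hpA]; exact hα p hp
          have hcov' : ∀ x, cov T₁ α' x = cov (T₂.erase A) β x := by
            intro x
            rw [cov_erase hA2', cov_update hA1, hcov x]
            have e : α A - (α A - β A) = β A := by ring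
            rw [e]
          have hcards : T₁.card + (T₂.erase A).card ≤ N := by
            rw [Finset.card_erase_of_mem hA2']
            have := Finset.card_pos.mpr ⟨A, hA2'⟩
            omega
          obtain ⟨hTe, -⟩ := ih T₁ (T₂.erase A) hcards hT₁
            (adm_subset hT₂ (Finset.erase_subset _ _)) α' β hα'
            (fun p hp => hβ p (Finset.mem_of_mem_erase hp)) hcov'
          have : A ∈ T₂.erase A := by rw [← hTe]; exact hA1
          exact (Finset.mem_erase.mp this).1 rfl

end ArcAux

namespace ArcAux

lemma cov_step {n : ℕ} [NeZero n] (hn : 3 ≤ n) {T : Finset (Fin n × Fin n)}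
    (hT : IsAdmissible T) (γ : Fin n × Fin n → ℝ) (y : Fin n) :
    cov T γ y - cov T γ (y - 1)
      = ∑ p ∈ T, γ p * ((if y = p.1 then (1:ℝ) else 0) - if y = p.2 then 1 else 0) := by
  unfold cov
  rw [← Finset.sum_sub_distrib]
  apply Finset.sum_congr rfl
  intro p hp
  have hp12 : p.1 ≠ p.2 := hT.1 p hp
  by_cases h1 : y = p.1
  · subst h1
    rw [if_pos (left_mem hp12), if_neg (pred_left_not_mem hn), if_pos rfl, if_neg hp12]
    ring
  · by_cases h2 : y = p.2
    · subst h2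
      rw [if_neg not_right_mem, if_pos (last_mem hn hp12), if_neg h1, if_pos rfl]
      ring
    · by_cases h3 : dd p.1 y < dd p.1 p.2
      · rw [if_pos h3, if_pos (pred_mem hn h3 h1), if_neg h1, if_neg h2]; ring
      · have h4 : ¬ dd p.1 (y - 1) < dd p.1 p.2 :=
          fun hc => h2 ((eq_right_iff hn hp12).mp ⟨h3, hc⟩)
        rw [if_neg h3, if_neg h4, if_neg h1, if_neg h2]; ring

lemma const_of_step {n : ℕ} [NeZero n] (hn : 3 ≤ n) (g : Fin n → ℝ)
    (hg : ∀ y, g y = g (y - 1)) : ∀ y, g y = g 0 := by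
  have h1v : (1 : Fin n).val = 1 := by rw [Fin.val_one']; exact Nat.mod_eq_of_lt (by omega)
  have key : ∀ m (h : m < n), g ⟨m, h⟩ = g 0 := by
    intro m
    induction m with
    | zero =>
        intro h
        have e0 : (⟨0, h⟩ : Fin n) = 0 := Fin.ext (by simp)
        rw [e0]
    | succ m ihm =>
        intro h
        have e : (⟨m + 1, h⟩ : Fin n) - 1 = ⟨m, by omega⟩ := by
          apply Fin.ext
          rw [sub_val, h1v]
          simp
        rw [hg ⟨m + 1, h⟩, e, ihm (by omega)]
  intro y
  have := key y.val y.isLt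
  simpa using this

lemma eval_coord {n : ℕ} (T : Finset (Fin n × Fin n)) (γ : Fin n × Fin n → ℝ) (y : Fin n) :
    (∑ p ∈ T, γ p • (EuclideanSpace.single p.1 (1:ℝ) - EuclideanSpace.single p.2 1) :
        EuclideanSpace ℝ (Fin n)) y
    = ∑ p ∈ T, γ p * ((if y = p.1 then (1:ℝ) else 0) - if y = p.2 then 1 else 0) := by
  induction T using Finset.cons_induction with
  | empty => simp
  | cons p s hp ih =>
      rw [Finset.sum_cons, Finset.sum_cons, ← ih]
      have h2 : ∀ (u v : EuclideanSpace ℝ (Fin n)), (u + v) y = u y + v y := fun u v => rfl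
      rw [h2]
      congr 1
      simp [EuclideanSpace.single_apply]

end ArcAux


open ArcAux

/-- Global injectivity of the canonical map `φₙ`: if a convex combination of the
vectors `e_i - e_j` over an admissible family `T₁` coincides with a convex
combination over an admissible family `T₂`, then `T₁ = T₂` and the
corresponding coefficients agree. -/
theorem admissible_convex_combination_unique (n : ℕ) (hn : 3 ≤ n)
    (T₁ T₂ : Finset (Fin n × Fin n))
    (hT₁ : IsAdmissible T₁) (hT₂ : IsAdmissible T₂)
    (α β : Fin n × Fin n → ℝ)
    (hα : ∀ p ∈ T₁, 0 < α p) (hβ : ∀ p ∈ T₂, 0 < β p)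
    (hsα : ∑ p ∈ T₁, α p = 1) (hsβ : ∑ p ∈ T₂, β p = 1)
    (heq : ∑ p ∈ T₁, α p • (EuclideanSpace.single p.1 (1 : ℝ) - EuclideanSpace.single p.2 (1 : ℝ))
         = ∑ p ∈ T₂, β p • (EuclideanSpace.single p.1 (1 : ℝ) - EuclideanSpace.single p.2 (1 : ℝ))) :
    T₁ = T₂ ∧ ∀ p ∈ T₁, α p = β p := by
  haveI : NeZero n := ⟨by omega⟩
  classical
  have hcoord : ∀ y : Fin n,
      ∑ p ∈ T₁, α p * ((if y = p.1 then (1:ℝ) else 0) - if y = p.2 then 1 else 0)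
      = ∑ p ∈ T₂, β p * ((if y = p.1 then (1:ℝ) else 0) - if y = p.2 then 1 else 0) := by
    intro y
    rw [← eval_coord T₁ α y, ← eval_coord T₂ β y, heq]
  have hg : ∀ y : Fin n, cov T₁ α y - cov T₂ β y = cov T₁ α 0 - cov T₂ β 0 := by
    apply const_of_step hn
    intro y
    have e1 := cov_step hn hT₁ α y
    have e2 := cov_step hn hT₂ β y
    have e3 := hcoord y
    linarith
  obtain ⟨x₁, hx₁⟩ := exists_uncovered hn hT₁
  obtain ⟨x₂, hx₂⟩ := exists_uncovered hn hT₂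
  have hz₁ : cov T₁ α x₁ = 0 := Finset.sum_eq_zero fun p hp => if_neg (hx₁ p hp)
  have hz₂ : cov T₂ β x₂ = 0 := Finset.sum_eq_zero fun p hp => if_neg (hx₂ p hp)
  have hcove : ∀ x, cov T₁ α x = cov T₂ β x := by
    intro x
    have h1 := hg x₁
    have h2 := hg x₂
    have h3 := hg x
    have n1 := cov_nonneg hβ x₁
    have n2 := cov_nonneg hα x₂
    linarith
  exact step3 hn (T₁.card + T₂.card) T₁ T₂ le_rfl hT₁ hT₂ α β hα hβ hcove
end

section
/- Let n ≥ 3. The intrinsic frontier (the frontier taken within the affine span, Mathlib's intrinsicFrontier) of the type A root polytope Root_n = convexHull ℝ {e_i − e_j : i ≠ j} equals the union, over all nonempty admissible families T of ordered pairs on Fin n, of the simplices convexHull ℝ {e_i − e_j : (i,j) ∈ T}. In particular the images of the admissible simplices cover the whole relative boundary of Root_n and each such simplex is contained in the relative boundary. -/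
namespace RP
variable {n : ℕ} [NeZero n]

/-- clock distance -/
def dst (i j : Fin n) : ℕ := ((j - i : Fin n) : ℕ)

lemma arc_def (i j : Fin n) : arcSet i j = {x | dst i x < dst i j} := rfl

lemma mem_arc {i j k : Fin n} : k ∈ arcSet i j ↔ dst i k < dst i j := Iff.rfl

lemma dst_lt (i j : Fin n) : dst i j < n := (j - i).isLt

@[simp] lemma dst_self (i : Fin n) : dst i i = 0 := by simp [dst]

lemma dst_eq_zero_iff {i j : Fin n} : dst i j = 0 ↔ i = j := by
  rw [dst, show ((j-i:Fin n):ℕ) = 0 ↔ j - i = 0 from Fin.val_eq_zero_iff, sub_eq_zero, eq_comm]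

lemma dst_pos {i j : Fin n} (h : i ≠ j) : 0 < dst i j :=
  Nat.pos_of_ne_zero (fun h0 => h (dst_eq_zero_iff.mp h0))

lemma self_mem_arc {i j : Fin n} (h : i ≠ j) : i ∈ arcSet i j := by
  simpa [mem_arc] using dst_pos h

lemma not_mem_arc_self (i j : Fin n) : j ∉ arcSet i j := by simp [mem_arc]

lemma dst_mod (i j k : Fin n) : (dst i j + dst j k) % n = dst i k := by
  have h : (j - i) + (k - j) = k - i := by abel
  calc (dst i j + dst j k) % n = (((j-i) + (k-j) : Fin n) : ℕ) := (Fin.val_add _ _).symm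
    _ = dst i k := by rw [h]; rfl

lemma dst_inj {i j k : Fin n} (h : dst i j = dst i k) : j = k := by
  have : (j - i : Fin n) = (k - i) := Fin.val_injective h
  exact sub_left_injective this

lemma dst_add_dst_rev {i j : Fin n} (h : i ≠ j) : dst i j + dst j i = n := by
  have h1 := dst_mod i j i
  rw [dst_self] at h1
  obtain ⟨k, hk⟩ := Nat.dvd_of_mod_eq_zero h1
  have h2 : dst i j + dst j i < 2 * n := by
    have := dst_lt i j; have := dst_lt j i; omega
  have hk2 : k < 2 := by
    by_contra hc
    push_neg at hc
    have : 2 * n ≤ n * k := by calc 2 * n = n * 2 := by ring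
                                   _ ≤ n * k := Nat.mul_le_mul_left n hc
    omega
  interval_cases k
  · simp at hk
    exact absurd (dst_eq_zero_iff.mp hk.1) h
  · omega

/-- key splitting: if `dst a b < dst a c` then going through `a` computes `dst c b`. -/
lemma dst_of_lt {a b c : Fin n} (h : dst a b < dst a c) : dst c b = dst c a + dst a b := by
  have hac : a ≠ c := by rintro rfl; simp at h
  have h1 : dst c a + dst a c = n := dst_add_dst_rev (Ne.symm hac)
  have h2 : dst c a + dst a b < n := by omega
  have h3 := dst_mod c a b
  rw [Nat.mod_eq_of_lt h2] at h3
  omega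

/-- splitting inside an arc: if `dst a b ≤ dst a c` then `dst a c = dst a b + dst b c`. -/
lemma dst_split {a b c : Fin n} (h : dst a b ≤ dst a c) : dst a c = dst a b + dst b c := by
  have h1 := dst_mod a b c
  have h2 : dst a b + dst b c < 2 * n := by have := dst_lt a b; have := dst_lt b c; omega
  have := dst_lt a c
  have := dst_lt b c
  rcases Nat.lt_or_ge (dst a b + dst b c) n with hlt | hge
  · rw [Nat.mod_eq_of_lt hlt] at h1; omega
  · have : (dst a b + dst b c) - n < n := by omega
    have h3 : (dst a b + dst b c) % n = dst a b + dst b c - n := by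
      rw [Nat.mod_eq_sub_mod hge, Nat.mod_eq_of_lt this]
    omega

set_option linter.unusedSectionVars false

/-- arcs with the same head are nested -/
lemma arc_same_head (i j j' : Fin n) : arcSet i j ⊆ arcSet i j' ∨ arcSet i j' ⊆ arcSet i j := by
  rcases le_total (dst i j) (dst i j') with h | h
  · exact Or.inl (fun k hk => lt_of_lt_of_le hk h)
  · exact Or.inr (fun k hk => lt_of_lt_of_le hk h)

/-- Key geometric lemma: under the sign conditions satisfied during the greedy
decomposition, the new arc `[i,j)` is nested with any old arc `[i',j')` whenever
they meet. -/
lemma key_nested {i j i' j' : Fin n}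
    (h2 : i' ∈ arcSet i j → i' = i) (h4 : j' ∉ arcSet i j)
    (hne : (arcSet i j ∩ arcSet i' j').Nonempty) :
    arcSet i j ⊆ arcSet i' j' ∨ arcSet i' j' ⊆ arcSet i j := by
  by_cases hii : i' = i
  · subst hii; exact arc_same_head i' j j'
  · -- i' ∉ arcSet i j
    have hi'arc : i' ∉ arcSet i j := fun h => hii (h2 h)
    have hle : dst i j ≤ dst i i' := not_lt.mp hi'arc
    obtain ⟨k, hk1, hk2⟩ := hne
    rw [mem_arc] at hk1 hk2
    left
    intro k₂ hk₂
    rw [mem_arc] at hk₂ ⊢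
    -- positions from i'
    have e1 : dst i' k = dst i' i + dst i k := dst_of_lt (lt_of_lt_of_le hk1 hle)
    have e2 : dst i' k₂ = dst i' i + dst i k₂ := dst_of_lt (lt_of_lt_of_le hk₂ hle)
    by_contra hc
    push_neg at hc
    -- then j' lies inside the arc [i, j)
    set s := dst i' j' - dst i' i with hs
    have hgt : dst i' i ≤ dst i' j' := by omega
    have hsn : s < n := by have := dst_lt i' j'; omega
    have hsplit : dst i' j' = dst i' i + s := by omega
    -- dst i j' = s
    have hij' : dst i j' = s := by
      have hmod := dst_mod i i' j'
      have hrev : dst i i' + dst i' i = n := dst_add_dst_rev (fun h => hii h.symm)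
      rw [hsplit, ← Nat.add_assoc, hrev, Nat.add_mod_left, Nat.mod_eq_of_lt hsn] at hmod
      exact hmod.symm
    have : j' ∈ arcSet i j := by rw [mem_arc, hij']; omega
    exact h4 this

lemma dst_succ (hn : 2 ≤ n) (w : Fin n) : dst w (w + 1) = 1 := by
  have : (w + 1 - w : Fin n) = 1 := by abel
  rw [dst, this, Fin.val_one']
  exact Nat.mod_eq_of_lt hn

/-- in an admissible family, no arc ends where another begins -/
lemma adm_head_ne_tail (hn : 2 ≤ n) {T : Finset (Fin n × Fin n)} (hT : IsAdmissible T)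
    {p q : Fin n × Fin n} (hp : p ∈ T) (hq : q ∈ T) : p.2 ≠ q.1 := by
  by_cases hpq : p = q
  · subst hpq; exact (hT.1 p hp).symm
  intro hEq
  obtain ⟨hmeet, hdisj⟩ := hT.2 p hp q hq hpq
  have hp12 : p.1 ≠ p.2 := hT.1 p hp
  have hq12 : q.1 ≠ q.2 := hT.1 q hq
  by_cases hE : (arcSet p.1 p.2 ∩ arcSet q.1 q.2) = ∅
  · exact (hdisj hE).1 hEq
  · rcases hmeet (Set.nonempty_iff_ne_empty.mpr hE) with hsub | hsub
    · -- arc p ⊆ arc q, with p.2 = q.1 : the last element of arc p is at distance n-1 from q.1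
      set w : Fin n := p.2 - 1 with hw
      have hw1 : w + 1 = p.2 := by rw [hw]; abel
      have hdw : dst w p.2 = 1 := by rw [← hw1]; exact dst_succ hn w
      have hwp2 : w ≠ p.2 := by
        intro h; rw [h] at hdw; simp at hdw
      have hd1 : 1 ≤ dst p.1 p.2 := dst_pos hp12
      have hwarc : w ∈ arcSet p.1 p.2 := by
        rw [mem_arc]
        have hmod := dst_mod p.1 w p.2
        rw [hdw] at hmod
        have h1 : dst p.1 w < n := dst_lt _ _
        rcases Nat.lt_or_ge (dst p.1 w + 1) n with hlt | hge
        · rw [Nat.mod_eq_of_lt hlt] at hmod; omega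
        · have : dst p.1 w + 1 = n := by omega
          rw [this] at hmod; simp at hmod
          have := dst_lt p.1 p.2
          omega
      have hwq := hsub hwarc
      rw [mem_arc] at hwq
      have : dst q.1 w = n - 1 := by
        have h2 : dst w q.1 = 1 := by rw [← hEq]; exact hdw
        have h3 := dst_add_dst_rev (i := q.1) (j := w) ?_
        · omega
        · intro h; rw [← h] at h2; simp at h2
      have := dst_lt q.1 q.2
      omega
    · -- arc q ⊆ arc p and q.1 = p.2 : then p.2 ∈ arc p, absurd
      have : q.1 ∈ arcSet q.1 q.2 := self_mem_arc hq12
      have := hsub this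
      rw [← hEq] at this
      exact not_mem_arc_self _ _ this

noncomputable def rootVec (n : ℕ) (p : Fin n × Fin n) : EuclideanSpace ℝ (Fin n) :=
  EuclideanSpace.single p.1 (1:ℝ) - EuclideanSpace.single p.2 1

lemma rootVec_apply (p : Fin n × Fin n) (l : Fin n) :
    rootVec n p l = (if l = p.1 then 1 else 0) - (if l = p.2 then 1 else 0) := by
  simp [rootVec, EuclideanSpace.single_apply]

lemma decomp (hn : 2 ≤ n) (N : ℕ) :
    ∀ (x : EuclideanSpace ℝ (Fin n)),
    (Finset.univ.filter (fun i => x i ≠ 0)).card ≤ N → (∑ i, x i = 0) →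
    ∃ (T : Finset (Fin n × Fin n)) (c : Fin n × Fin n → ℝ),
      IsAdmissible T ∧ (∀ p ∈ T, 0 < c p ∧ 0 < x p.1 ∧ x p.2 < 0) ∧
      (∑ p ∈ T, c p) = ∑ i, max (x i) 0 ∧
      (∑ p ∈ T, c p • rootVec n p) = x := by
  induction N with
  | zero =>
    intro x hcard hsum
    have hx : ∀ i, x i = 0 := by
      intro i
      by_contra h
      have : i ∈ Finset.univ.filter (fun i => x i ≠ 0) := by simp [h]
      have := Finset.card_pos.mpr ⟨i, this⟩
      omega
    refine ⟨∅, 0, ⟨by simp, by simp⟩, by simp, ?_, ?_⟩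
    · simp [hx]
    · ext l
      simp [hx]
  | succ N IH =>
    intro x hcard hsum
    by_cases hpos : ∀ i, x i ≤ 0
    · -- all coordinates vanish
      have hx : ∀ i, x i = 0 := by
        intro i
        have := (Finset.sum_eq_zero_iff_of_nonpos (fun i _ => hpos i)).mp hsum
        exact this i (Finset.mem_univ i)
      refine ⟨∅, 0, ⟨by simp, by simp⟩, by simp, ?_, ?_⟩
      · simp [hx]
      · ext l
        simp [hx]
    · push_neg at hpos
      obtain ⟨i₀, hi₀⟩ := hpos
      have hneg : ∃ j, x j < 0 := by
        by_contra h
        push_neg at h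
        have : (0:ℝ) < ∑ i, x i := by
          have h1 : x i₀ ≤ ∑ i, x i :=
            Finset.single_le_sum (fun i _ => h i) (Finset.mem_univ i₀)
          linarith
        linarith
      obtain ⟨j₀, hj₀⟩ := hneg
      -- choose a pair minimizing the clock distance
      set D : Finset (Fin n × Fin n) :=
        Finset.univ.filter (fun p => 0 < x p.1 ∧ x p.2 < 0) with hD
      have hDne : D.Nonempty := ⟨(i₀, j₀), by simp [hD, hi₀, hj₀]⟩
      obtain ⟨p₀, hp₀D, hmin⟩ := D.exists_min_image (fun p => dst p.1 p.2) hDne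
      obtain ⟨i, j⟩ := p₀
      simp only [hD, Finset.mem_filter] at hp₀D
      obtain ⟨-, hxi, hxj⟩ := hp₀D
      have hij : i ≠ j := fun h => by rw [h] at hxi; linarith
      -- interior of the arc [i, j) consists of zero coordinates
      have hzero : ∀ k, 0 < dst i k → dst i k < dst i j → x k = 0 := by
        intro k h1 h2
        rcases lt_trichotomy (x k) 0 with hk | hk | hk
        · exfalso
          have hmem : (i, k) ∈ D := by simp [hD, hxi, hk]
          have hle : dst i j ≤ dst i k := hmin _ hmem
          omega
        · exact hk
        · exfalso
          have hmem : (k, j) ∈ D := by simp [hD, hk, hxj]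
          have hle : dst i j ≤ dst k j := hmin _ hmem
          have hsplit := dst_split (le_of_lt h2)
          omega
      set m : ℝ := min (x i) (-(x j)) with hm
      have hm0 : 0 < m := lt_min hxi (by linarith)
      have hmxi : m ≤ x i := min_le_left _ _
      have hmxj : m ≤ -(x j) := min_le_right _ _
      set x' : EuclideanSpace ℝ (Fin n) := x - m • rootVec n (i, j) with hx'
      have happ : ∀ l, x' l = x l - m * ((if l = i then 1 else 0) - (if l = j then 1 else 0)) := by
        intro l
        rw [hx']
        show x l - m * rootVec n (i,j) l = _
        rw [rootVec_apply]
      have hx'i : x' i = x i - m := by rw [happ]; simp [hij]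
      have hx'j : x' j = x j + m := by rw [happ]; simp [hij.symm]
      have hx'other : ∀ l, l ≠ i → l ≠ j → x' l = x l := by
        intro l h1 h2; rw [happ]; simp [h1, h2]
      have hx'i0 : 0 ≤ x' i := by rw [hx'i]; linarith
      have hx'j0 : x' j ≤ 0 := by rw [hx'j]; linarith
      -- the new vector sums to zero
      have hsum' : ∑ l, x' l = 0 := by
        have h1 : ∑ l : Fin n, (if l = i then (1:ℝ) else 0) = 1 := by simp
        have h2 : ∑ l : Fin n, (if l = j then (1:ℝ) else 0) = 1 := by simp
        calc ∑ l, x' l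
            = ∑ l, (x l - m * ((if l = i then 1 else 0) - (if l = j then 1 else 0))) :=
              Finset.sum_congr rfl (fun l _ => happ l)
          _ = (∑ l, x l) - m * ((∑ l : Fin n, (if l = i then (1:ℝ) else 0))
                - ∑ l : Fin n, (if l = j then (1:ℝ) else 0)) := by
              rw [Finset.sum_sub_distrib, ← Finset.mul_sum, Finset.sum_sub_distrib]
          _ = 0 := by rw [hsum, h1, h2]; ring
      -- support strictly decreases
      have hsub : Finset.univ.filter (fun l => x' l ≠ 0) ⊆ Finset.univ.filter (fun l => x l ≠ 0) := by
        intro l hl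
        simp only [Finset.mem_filter, Finset.mem_univ, true_and] at hl ⊢
        by_cases h1 : l = i
        · subst h1; exact ne_of_gt hxi
        by_cases h2 : l = j
        · subst h2; exact ne_of_lt hxj
        · rw [hx'other l h1 h2] at hl; exact hl
      have hssub : Finset.univ.filter (fun l => x' l ≠ 0) ⊂ Finset.univ.filter (fun l => x l ≠ 0) := by
        rw [Finset.ssubset_iff_of_subset hsub]
        rcases min_cases (x i) (-(x j)) with ⟨hc, -⟩ | ⟨hc, -⟩
        · refine ⟨i, ?_, ?_⟩
          · simp only [Finset.mem_filter, Finset.mem_univ, true_and]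
            exact ne_of_gt hxi
          · simp only [Finset.mem_filter, Finset.mem_univ, true_and, not_not]
            rw [hx'i, hm, hc]; ring
        · refine ⟨j, ?_, ?_⟩
          · simp only [Finset.mem_filter, Finset.mem_univ, true_and]
            exact ne_of_lt hxj
          · simp only [Finset.mem_filter, Finset.mem_univ, true_and, not_not]
            rw [hx'j, hm, hc]; ring
      have hcard' : (Finset.univ.filter (fun l => x' l ≠ 0)).card ≤ N := by
        have := Finset.card_lt_card hssub
        omega
      obtain ⟨T, c, hadm, hsigns, hsumc, hvec⟩ := IH x' hcard' hsum'
      -- basic exclusions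
      have hp1j : ∀ p ∈ T, p.1 ≠ j := by
        intro p hp h
        have := (hsigns p hp).2.1
        rw [h] at this; linarith
      have hp2i : ∀ p ∈ T, p.2 ≠ i := by
        intro p hp h
        have := (hsigns p hp).2.2
        rw [h] at this; linarith
      have hxp1 : ∀ p ∈ T, 0 < x p.1 := by
        intro p hp
        by_cases h1 : p.1 = i
        · rw [h1]; exact hxi
        · rw [← hx'other p.1 h1 (hp1j p hp)]; exact (hsigns p hp).2.1
      have hxp2 : ∀ p ∈ T, x p.2 < 0 := by
        intro p hp
        by_cases h2 : p.2 = j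
        · rw [h2]; exact hxj
        · rw [← hx'other p.2 (hp2i p hp) h2]; exact (hsigns p hp).2.2
      have hijT : (i, j) ∉ T := by
        intro hmem
        obtain ⟨-, h1, h2⟩ := hsigns (i,j) hmem
        rcases min_cases (x i) (-(x j)) with ⟨hc, -⟩ | ⟨hc, -⟩
        · rw [hx'i, hm, hc] at h1; simp at h1
        · rw [hx'j, hm, hc] at h2; linarith
      -- hypotheses of the key nesting lemma, for each old pair
      have hkey : ∀ q ∈ T, (q.1 ∈ arcSet i j → q.1 = i) ∧ q.1 ≠ j ∧ q.2 ∉ arcSet i j := by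
        intro q hq
        have hq1 := (hsigns q hq).2.1
        have hq2 := (hsigns q hq).2.2
        refine ⟨?_, hp1j q hq, ?_⟩
        · intro hmem
          rw [mem_arc] at hmem
          by_cases h0 : dst i q.1 = 0
          · exact (dst_eq_zero_iff.mp h0).symm
          · exfalso
            have hz := hzero q.1 (Nat.pos_of_ne_zero h0) hmem
            have hne_i : q.1 ≠ i := fun h => h0 (by rw [h]; simp)
            rw [hx'other q.1 hne_i (hp1j q hq), hz] at hq1
            linarith
        · intro hmem
          rw [mem_arc] at hmem
          have hne_i : q.2 ≠ i := hp2i q hq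
          have hne_j : q.2 ≠ j := by
            intro h; rw [h] at hmem; omega
          by_cases h0 : dst i q.2 = 0
          · exact hne_i (dst_eq_zero_iff.mp h0).symm
          · have hz := hzero q.2 (Nat.pos_of_ne_zero h0) hmem
            rw [hx'other q.2 hne_i hne_j, hz] at hq2
            linarith
      refine ⟨insert (i,j) T, Function.update c (i,j) m, ?_, ?_, ?_, ?_⟩
      · -- admissibility
        constructor
        · intro p hp
          rcases Finset.mem_insert.mp hp with h | h
          · rw [h]; exact hij
          · exact hadm.1 p h
        · intro p hp q hq hpq
          rcases Finset.mem_insert.mp hp with h1 | h1 <;>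
            rcases Finset.mem_insert.mp hq with h2 | h2
          · exact absurd (h1.trans h2.symm) hpq
          · subst h1
            obtain ⟨k2, k3, k4⟩ := hkey q h2
            constructor
            · intro hne
              exact key_nested k2 k4 hne
            · intro hdisj
              refine ⟨fun h => k3 h.symm, fun h => k4 (by rw [h]; exact self_mem_arc hij)⟩
          · subst h2
            obtain ⟨k2, k3, k4⟩ := hkey p h1
            constructor
            · intro hne
              rw [Set.inter_comm] at hne
              exact (key_nested k2 k4 hne).symm
            · intro hdisj
              refine ⟨fun h => k4 (by rw [h]; exact self_mem_arc hij), fun h => k3 h.symm⟩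
          · exact hadm.2 p h1 q h2 hpq
      · -- signs
        intro p hp
        rcases Finset.mem_insert.mp hp with h | h
        · subst h
          rw [Function.update_self]
          exact ⟨hm0, hxi, hxj⟩
        · have hne : p ≠ (i,j) := by rintro rfl; exact hijT h
          rw [Function.update_of_ne hne]
          exact ⟨(hsigns p h).1, hxp1 p h, hxp2 p h⟩
      · -- total mass
        rw [Finset.sum_insert hijT, Function.update_self]
        have hrest : ∑ p ∈ T, Function.update c (i,j) m p = ∑ p ∈ T, c p :=
          Finset.sum_congr rfl (fun p hp =>
            Function.update_of_ne (by rintro rfl; exact hijT hp) _ _)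
        rw [hrest, hsumc]
        -- ∑ max x = m + ∑ max x'
        have hdiff : ∀ l, max (x l) 0 - max (x' l) 0 = if l = i then m else 0 := by
          intro l
          by_cases h1 : l = i
          · subst h1
            rw [if_pos rfl, max_eq_left (le_of_lt hxi), max_eq_left hx'i0, hx'i]
            ring
          by_cases h2 : l = j
          · subst h2
            rw [if_neg h1, max_eq_right (le_of_lt hxj), max_eq_right hx'j0]
            ring
          · rw [hx'other l h1 h2, if_neg h1]
            ring
        have : ∑ l, (max (x l) 0 - max (x' l) 0) = m := by
          rw [Finset.sum_congr rfl (fun l _ => hdiff l)]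
          simp
        rw [Finset.sum_sub_distrib] at this
        linarith
      · -- the vector identity
        rw [Finset.sum_insert hijT, Function.update_self]
        have hrest : ∑ p ∈ T, Function.update c (i,j) m p • rootVec n p
            = ∑ p ∈ T, c p • rootVec n p :=
          Finset.sum_congr rfl (fun p hp => by
            rw [Function.update_of_ne (show p ≠ (i,j) by rintro rfl; exact hijT hp)])
        rw [hrest, hvec, hx']
        abel

section Polytope

variable (n : ℕ) [NeZero n]

/-- the set of type A roots -/
def gens : Set (EuclideanSpace ℝ (Fin n)) :=
  {x | ∃ i j : Fin n, i ≠ j ∧ x = EuclideanSpace.single i 1 - EuclideanSpace.single j 1}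

/-- the root polytope -/
def RootP : Set (EuclideanSpace ℝ (Fin n)) := convexHull ℝ (gens n)

/-- H-description of the root polytope -/
def Qset : Set (EuclideanSpace ℝ (Fin n)) :=
  {x | (∑ i, x i = 0) ∧ ∀ S : Finset (Fin n), (∑ i ∈ S, x i) ≤ 1}

variable {n}

lemma rootVec_mem_gens {p : Fin n × Fin n} (h : p.1 ≠ p.2) : rootVec n p ∈ gens n :=
  ⟨p.1, p.2, h, rfl⟩

lemma gens_finite : (gens n).Finite := by
  apply Set.Finite.subset (Set.finite_range (rootVec n))
  rintro x ⟨i, j, hij, rfl⟩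
  exact ⟨(i, j), rfl⟩

lemma isClosed_RootP : IsClosed (RootP n) := by unfold RootP; exact gens_finite.isClosed_convexHull (𝕜 := ℝ)

lemma sum_single (i : Fin n) (S : Finset (Fin n)) :
    (∑ l ∈ S, (EuclideanSpace.single i (1:ℝ)) l) = if i ∈ S then 1 else 0 := by
  rw [Finset.sum_congr rfl (fun l _ => EuclideanSpace.single_apply i 1 l)]
  exact Finset.sum_ite_eq' S i (fun _ => (1:ℝ))

lemma sum_rootVec (p : Fin n × Fin n) (S : Finset (Fin n)) :
    (∑ l ∈ S, rootVec n p l) = (if p.1 ∈ S then (1:ℝ) else 0) - (if p.2 ∈ S then 1 else 0) := by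
  have : ∀ l ∈ S, rootVec n p l
      = (EuclideanSpace.single p.1 (1:ℝ)) l - (EuclideanSpace.single p.2 (1:ℝ)) l := by
    intro l _; rw [rootVec_apply]; simp [EuclideanSpace.single_apply]
  rw [Finset.sum_congr rfl this, Finset.sum_sub_distrib, sum_single, sum_single]

lemma convex_Qset : Convex ℝ (Qset n) := by
  have h0 : Convex ℝ {x : EuclideanSpace ℝ (Fin n) | ∑ i, x i = 0} := by
    have : IsLinearMap ℝ (fun y : EuclideanSpace ℝ (Fin n) => ∑ i, y i) :=
      ⟨fun a b => by simp [Finset.sum_add_distrib], fun c a => by simp [Finset.mul_sum]⟩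
    exact convex_hyperplane this 0
  have hS : ∀ S : Finset (Fin n), Convex ℝ {x : EuclideanSpace ℝ (Fin n) | (∑ i ∈ S, x i) ≤ 1} := by
    intro S
    have : IsLinearMap ℝ (fun y : EuclideanSpace ℝ (Fin n) => ∑ i ∈ S, y i) :=
      ⟨fun a b => by simp [Finset.sum_add_distrib], fun c a => by simp [Finset.mul_sum]⟩
    exact convex_halfSpace_le this 1
  have : Qset n = {x : EuclideanSpace ℝ (Fin n) | ∑ i, x i = 0} ∩
      ⋂ S : Finset (Fin n), {x : EuclideanSpace ℝ (Fin n) | (∑ i ∈ S, x i) ≤ 1} := by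
    ext x; simp [Qset, Set.mem_iInter]
  rw [this]
  exact h0.inter (convex_iInter hS)

lemma gens_subset_Qset : gens n ⊆ Qset n := by
  rintro x ⟨i, j, hij, rfl⟩
  have hx : ∀ l, (EuclideanSpace.single i (1:ℝ) - EuclideanSpace.single j 1 : EuclideanSpace ℝ (Fin n)) l
      = rootVec n (i,j) l := fun l => rfl
  constructor
  · rw [Finset.sum_congr rfl (fun l _ => hx l), sum_rootVec]
    simp
  · intro S
    rw [Finset.sum_congr rfl (fun l _ => hx l), sum_rootVec]
    dsimp only
    split_ifs <;> norm_num

lemma RootP_subset_Qset : RootP n ⊆ Qset n :=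
  convexHull_min gens_subset_Qset convex_Qset

lemma zero_mem_RootP (hn : 2 ≤ n) : (0 : EuclideanSpace ℝ (Fin n)) ∈ RootP n := by
  have h01 : (0 : Fin n) ≠ 1 := by
    have h1 : ((1 : Fin n) : ℕ) = 1 % n := Fin.val_one' n
    intro h
    have := congrArg Fin.val h
    rw [Fin.val_zero, h1, Nat.mod_eq_of_lt hn] at this
    omega
  have hg1 : (EuclideanSpace.single (0:Fin n) (1:ℝ) - EuclideanSpace.single 1 1) ∈ gens n :=
    ⟨0, 1, h01, rfl⟩
  have hg2 : (EuclideanSpace.single (1:Fin n) (1:ℝ) - EuclideanSpace.single 0 1) ∈ gens n :=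
    ⟨1, 0, h01.symm, rfl⟩
  have := (convex_convexHull ℝ (gens n)) (subset_convexHull ℝ _ hg1) (subset_convexHull ℝ _ hg2)
      (by norm_num : (0:ℝ) ≤ 1/2) (by norm_num : (0:ℝ) ≤ 1/2) (by norm_num)
  have heq : ((1:ℝ)/2) • (EuclideanSpace.single (0:Fin n) (1:ℝ) - EuclideanSpace.single 1 1)
      + ((1:ℝ)/2) • (EuclideanSpace.single (1:Fin n) (1:ℝ) - EuclideanSpace.single 0 1) = 0 := by
    abel_nf
    module
  rw [heq] at this
  exact this

lemma posPart_le_one {x : EuclideanSpace ℝ (Fin n)} (hx : x ∈ Qset n) :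
    (∑ l, max (x l) 0) ≤ 1 := by
  have hsplit := Finset.sum_filter_add_sum_filter_not Finset.univ
    (fun l => 0 < x l) (fun l => max (x l) 0)
  have h1 : ∑ l ∈ Finset.univ.filter (fun l => 0 < x l), max (x l) 0
      = ∑ l ∈ Finset.univ.filter (fun l => 0 < x l), x l :=
    Finset.sum_congr rfl (fun l hl => by
      simp only [Finset.mem_filter] at hl
      exact max_eq_left (le_of_lt hl.2))
  have h2 : ∑ l ∈ Finset.univ.filter (fun l => ¬ 0 < x l), max (x l) 0 = 0 :=
    Finset.sum_eq_zero (fun l hl => by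
      simp only [Finset.mem_filter] at hl
      exact max_eq_right (not_lt.mp hl.2))
  have := hx.2 (Finset.univ.filter (fun l => 0 < x l))
  calc (∑ l, max (x l) 0)
      = ∑ l ∈ Finset.univ.filter (fun l => 0 < x l), max (x l) 0
        + ∑ l ∈ Finset.univ.filter (fun l => ¬ 0 < x l), max (x l) 0 := hsplit.symm
    _ ≤ 1 := by rw [h1, h2]; simpa using this

lemma Qset_subset_RootP (hn : 2 ≤ n) : Qset n ⊆ RootP n := by
  intro x hx
  obtain ⟨T, c, hadm, hsigns, hsumc, hvec⟩ := decomp hn n x (by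
      simpa using Finset.card_filter_le Finset.univ (fun i => x i ≠ 0)) hx.1
  rcases Finset.eq_empty_or_nonempty T with hT | hT
  · subst hT
    simp only [Finset.sum_empty] at hvec
    rw [← hvec]
    exact zero_mem_RootP hn
  · set μ := ∑ p ∈ T, c p with hμ
    have hμpos : 0 < μ :=
      Finset.sum_pos (fun p hp => (hsigns p hp).1) hT
    have hμ1 : μ ≤ 1 := by
      rw [hsumc]
      exact posPart_le_one hx
    have hymem : T.centerMass c (rootVec n) ∈ RootP n :=
      Finset.centerMass_mem_convexHull T (fun p hp => le_of_lt (hsigns p hp).1)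
        hμpos (fun p hp => rootVec_mem_gens (hadm.1 p hp))
    have hyval : T.centerMass c (rootVec n) = μ⁻¹ • x := by
      unfold Finset.centerMass
      rw [← hμ, hvec]
    have hcomb := (convex_convexHull ℝ (gens n)) hymem (zero_mem_RootP hn)
      (le_of_lt hμpos) (by linarith : (0:ℝ) ≤ 1 - μ) (by ring)
    have : μ • T.centerMass c (rootVec n) + (1 - μ) • (0 : EuclideanSpace ℝ (Fin n)) = x := by
      rw [hyval, smul_smul, mul_inv_cancel₀ (ne_of_gt hμpos), one_smul, smul_zero, add_zero]
    rw [this] at hcomb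
    exact hcomb

lemma RootP_eq_Qset (hn : 2 ≤ n) : RootP n = Qset n :=
  Set.Subset.antisymm RootP_subset_Qset (Qset_subset_RootP hn)

/-- the affine span of the root polytope is the sum-zero hyperplane -/
lemma span_RootP (hn : 2 ≤ n) :
    (affineSpan ℝ (RootP n) : Set (EuclideanSpace ℝ (Fin n)))
      = {x | ∑ i, x i = 0} := by
  have hlin : IsLinearMap ℝ (fun y : EuclideanSpace ℝ (Fin n) => ∑ i, y i) :=
    ⟨fun a b => by simp [Finset.sum_add_distrib], fun c a => by simp [Finset.mul_sum]⟩
  apply Set.Subset.antisymm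
  · have hle : affineSpan ℝ (RootP n) ≤ (LinearMap.ker (IsLinearMap.mk' _ hlin)).toAffineSubspace := by
      apply affineSpan_le.mpr
      intro z hz
      show z ∈ (LinearMap.ker (IsLinearMap.mk' _ hlin)).toAffineSubspace
      rw [Submodule.mem_toAffineSubspace, LinearMap.mem_ker]
      exact (RootP_subset_Qset hz).1
    intro z hz
    have h2 : z ∈ (LinearMap.ker (IsLinearMap.mk' _ hlin)).toAffineSubspace := hle hz
    rw [Submodule.mem_toAffineSubspace, LinearMap.mem_ker] at h2
    exact h2
  · intro x hx
    have hx : ∑ i, x i = 0 := hx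
    have h0P : (0 : EuclideanSpace ℝ (Fin n)) ∈ RootP n := zero_mem_RootP hn
    have h0span : (0 : EuclideanSpace ℝ (Fin n)) ∈ affineSpan ℝ (RootP n) :=
      subset_affineSpan ℝ _ h0P
    -- x lies in the vector span
    set w : Fin n → EuclideanSpace ℝ (Fin n) :=
      fun i => EuclideanSpace.single i (1:ℝ) - EuclideanSpace.single 0 1 with hw
    have hwmem : ∀ i, w i ∈ vectorSpan ℝ (RootP n) := by
      intro i
      by_cases h : i = (0 : Fin n)
      · subst h
        have : w 0 = 0 := by rw [hw]; simp
        rw [this]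
        exact Submodule.zero_mem _
      · have hgen : w i ∈ RootP n := subset_convexHull ℝ _ ⟨i, 0, h, rfl⟩
        have := vsub_mem_vectorSpan ℝ hgen h0P
        simpa using this
    have hxspan : x ∈ vectorSpan ℝ (RootP n) := by
      have hxw : x = ∑ i, x i • w i := by
        ext l
        rw [WithLp.ofLp_sum, Finset.sum_apply]
        have : ∀ i, (x i • w i : EuclideanSpace ℝ (Fin n)) l
            = x i * ((if l = i then 1 else 0) - (if l = 0 then 1 else 0)) := by
          intro i
          show x i * (w i l) = _
          rw [hw]
          simp [EuclideanSpace.single_apply]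
        rw [Finset.sum_congr rfl (fun i _ => this i)]
        have expand : ∀ i, x i * ((if l = i then (1:ℝ) else 0) - (if l = 0 then 1 else 0))
            = x i * (if l = i then (1:ℝ) else 0) - x i * (if l = 0 then 1 else 0) := by
          intro i; ring
        rw [Finset.sum_congr rfl (fun i _ => expand i), Finset.sum_sub_distrib,
          ← Finset.sum_mul, hx]
        simp [Finset.sum_ite_eq]
      rw [hxw]
      exact Submodule.sum_mem _ (fun i _ => Submodule.smul_mem _ _ (hwmem i))
    have := AffineSubspace.vadd_mem_of_mem_direction
      (by rw [direction_affineSpan]; exact hxspan) h0span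
    simpa using this

lemma mem_span_iff (hn : 2 ≤ n) {z : EuclideanSpace ℝ (Fin n)} :
    z ∈ affineSpan ℝ (RootP n) ↔ ∑ i, z i = 0 := by
  rw [← AffineSubspace.mem_coe, span_RootP hn]
  exact Iff.rfl

lemma sum_RootP_eq_zero {x : EuclideanSpace ℝ (Fin n)} (hx : x ∈ RootP n) : ∑ i, x i = 0 :=
  (RootP_subset_Qset hx).1

/-- points of the polytope saturating a facet inequality are in the intrinsic frontier -/
lemma mem_frontier_of_eq_one (hn : 2 ≤ n) {x : EuclideanSpace ℝ (Fin n)} (hx : x ∈ RootP n)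
    (S : Finset (Fin n)) (hS1 : S.Nonempty) (hS2 : S ≠ Finset.univ)
    (hsum1 : (∑ i ∈ S, x i) = 1) : x ∈ intrinsicFrontier ℝ (RootP n) := by
  rw [← closure_diff_intrinsicInterior]
  refine ⟨subset_closure hx, ?_⟩
  intro hmem
  rcases hmem with ⟨y, hyint, hxy⟩
  -- the perturbation direction
  set u : EuclideanSpace ℝ (Fin n) :=
    WithLp.toLp 2 (fun l => (if l ∈ S then (1:ℝ) else 0) - (S.card : ℝ)/n : Fin n → ℝ) with hu
  have hucard : (S.card : ℝ) < n := by
    have h1 : S.card ≤ n := by simpa using S.card_le_univ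
    have h2 : S.card ≠ n := fun h => hS2 (Finset.card_eq_iff_eq_univ S |>.mp (by simpa using h))
    have : S.card < n := lt_of_le_of_ne h1 h2
    exact_mod_cast this
  have hncast : (0:ℝ) < n := by positivity -- n ≥ 2
  have huapp : ∀ l, u l = (if l ∈ S then (1:ℝ) else 0) - (S.card : ℝ)/n := fun l => rfl
  have husum : ∑ l, u l = 0 := by
    rw [Finset.sum_congr rfl (fun l _ => huapp l), Finset.sum_sub_distrib]
    rw [Finset.sum_boole]
    simp only [Finset.filter_mem_eq_inter, Finset.univ_inter, Finset.sum_const]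
    rw [Finset.card_univ, Fintype.card_fin]
    field_simp
    rw [nsmul_eq_mul, mul_div_assoc', mul_div_cancel_left₀ _ (ne_of_gt hncast), sub_self]
  have huS : (∑ l ∈ S, u l) = (S.card : ℝ) * ((n : ℝ) - S.card)/n := by
    rw [Finset.sum_congr rfl (fun l hl => huapp l), Finset.sum_sub_distrib]
    rw [Finset.sum_congr rfl (fun l hl => if_pos hl), Finset.sum_const, Finset.sum_const]
    field_simp
    rw [nsmul_eq_mul, nsmul_eq_mul, mul_one, mul_sub, mul_div_assoc', mul_div_assoc',
      mul_div_cancel_left₀ _ (ne_of_gt hncast)]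
    ring
  have huSpos : 0 < ∑ l ∈ S, u l := by
    rw [huS]
    have hc : (0:ℝ) < S.card := by
      have := hS1.card_pos; exact_mod_cast this
    have : (0:ℝ) < (n:ℝ) - S.card := by linarith
    positivity
  -- the curve
  have hmemspan : ∀ t : ℝ, x + t • u ∈ affineSpan ℝ (RootP n) := by
    intro t
    rw [mem_span_iff hn]
    have : ∀ l, (x + t • u : EuclideanSpace ℝ (Fin n)) l = x l + t * u l := fun l => rfl
    rw [Finset.sum_congr rfl (fun l _ => this l), Finset.sum_add_distrib, ← Finset.mul_sum,
      husum, sum_RootP_eq_zero hx]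
    ring
  set φ : ℝ → affineSpan ℝ (RootP n) := fun t => ⟨x + t • u, hmemspan t⟩ with hφ
  have hφcont : Continuous φ := by
    apply Continuous.subtype_mk
    exact continuous_const.add (continuous_id.smul continuous_const)
  have hφ0 : φ 0 = y := by
    apply Subtype.ext
    show x + (0:ℝ) • u = ↑y
    rw [zero_smul, add_zero, hxy]
  have hopen : IsOpen (φ ⁻¹' interior (((↑) : affineSpan ℝ (RootP n) → EuclideanSpace ℝ (Fin n))
      ⁻¹' RootP n)) := isOpen_interior.preimage hφcont
  have h0mem : (0:ℝ) ∈ φ ⁻¹' interior (((↑) : affineSpan ℝ (RootP n) → EuclideanSpace ℝ (Fin n))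
      ⁻¹' RootP n) := by
    rw [Set.mem_preimage, hφ0]
    exact hyint
  obtain ⟨ε, hε, hball⟩ := Metric.isOpen_iff.mp hopen 0 h0mem
  have htmem : (ε/2) ∈ Metric.ball (0:ℝ) ε := by
    rw [Metric.mem_ball, Real.dist_eq]
    rw [abs_of_pos (by linarith)]
    linarith
  have := hball htmem
  rw [Set.mem_preimage] at this
  have hP' := interior_subset this
  rw [Set.mem_preimage] at hP'
  have hP : x + (ε/2) • u ∈ RootP n := hP'
  have hQ := (RootP_subset_Qset hP).2 S
  have hsum2 : (∑ i ∈ S, (x + (ε/2) • u : EuclideanSpace ℝ (Fin n)) i)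
      = 1 + (ε/2) * ∑ l ∈ S, u l := by
    have : ∀ l, (x + (ε/2) • u : EuclideanSpace ℝ (Fin n)) l = x l + (ε/2) * u l := fun l => rfl
    rw [Finset.sum_congr rfl (fun l _ => this l), Finset.sum_add_distrib, ← Finset.mul_sum, hsum1]
  rw [hsum2] at hQ
  nlinarith

/-- points of the polytope satisfying all inequalities strictly are in the intrinsic interior -/
lemma mem_interior_of_lt_one (hn : 2 ≤ n) {x : EuclideanSpace ℝ (Fin n)} (hx : x ∈ RootP n)
    (hlt : ∀ S : Finset (Fin n), (∑ i ∈ S, x i) < 1) :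
    x ∈ intrinsicInterior ℝ (RootP n) := by
  refine mem_intrinsicInterior.mpr ⟨⟨x, subset_affineSpan ℝ _ hx⟩, ?_, rfl⟩
  set U : Set (affineSpan ℝ (RootP n)) :=
    ⋂ S : Finset (Fin n), {y : affineSpan ℝ (RootP n) | (∑ i ∈ S, (y : EuclideanSpace ℝ (Fin n)) i) < 1}
    with hU
  have hUopen : IsOpen U := by
    apply isOpen_iInter_of_finite
    intro S
    have hc : Continuous (fun y : affineSpan ℝ (RootP n) => ∑ i ∈ S, (y : EuclideanSpace ℝ (Fin n)) i) := by
      apply continuous_finset_sum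
      intro i _
      exact ((EuclideanSpace.proj i).continuous).comp continuous_subtype_val
    exact isOpen_lt hc continuous_const
  have hUsub : U ⊆ ((↑) : affineSpan ℝ (RootP n) → EuclideanSpace ℝ (Fin n)) ⁻¹' RootP n := by
    intro y hy
    have hyQ : (y : EuclideanSpace ℝ (Fin n)) ∈ Qset n :=
      ⟨(mem_span_iff hn).mp y.2, fun S => le_of_lt (Set.mem_iInter.mp hy S)⟩
    exact Set.mem_preimage.mpr (Qset_subset_RootP hn hyQ)
  have hxU : (⟨x, subset_affineSpan ℝ _ hx⟩ : affineSpan ℝ (RootP n)) ∈ U :=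
    Set.mem_iInter.mpr (fun S => hlt S)
  exact interior_maximal hUsub hUopen hxU

end Polytope
end RP

/-- The relative (intrinsic) boundary of the type A root polytope is the union of
the simplices spanned by the sets `{e_i - e_j : (i,j) ∈ T}`, over all nonempty
admissible families `T` of arcs. -/
theorem intrinsicFrontier_rootPolytope_eq_union (n : ℕ) (hn : 3 ≤ n) :
    intrinsicFrontier ℝ
        (convexHull ℝ {x : EuclideanSpace ℝ (Fin n) |
          ∃ i j : Fin n, i ≠ j ∧ x = EuclideanSpace.single i 1 - EuclideanSpace.single j 1}) =
      ⋃ T ∈ {T : Finset (Fin n × Fin n) | IsAdmissible T ∧ T.Nonempty},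
        convexHull ℝ
          ((fun p : Fin n × Fin n =>
            EuclideanSpace.single p.1 (1 : ℝ) - EuclideanSpace.single p.2 (1 : ℝ)) '' ↑T) := by
  haveI : NeZero n := ⟨by omega⟩
  have hn2 : 2 ≤ n := by omega
  show intrinsicFrontier ℝ (RP.RootP n) = _
  ext x
  constructor
  · intro hx
    have hxP : x ∈ RP.RootP n := intrinsicFrontier_subset RP.isClosed_RootP hx
    have hnotint : x ∉ intrinsicInterior ℝ (RP.RootP n) := by
      rw [← closure_diff_intrinsicInterior] at hx
      exact hx.2
    have hQ := RP.RootP_subset_Qset hxP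
    obtain ⟨S, hS⟩ : ∃ S : Finset (Fin n), (∑ i ∈ S, x i) = 1 := by
      by_contra h
      push_neg at h
      exact hnotint (RP.mem_interior_of_lt_one hn2 hxP
        (fun S => lt_of_le_of_ne (hQ.2 S) (h S)))
    -- sign conditions
    have hpos : ∀ l ∈ S, 0 ≤ x l := by
      intro l hl
      by_contra hneg
      push_neg at hneg
      have hsplit : x l + ∑ i ∈ S.erase l, x i = ∑ i ∈ S, x i := Finset.add_sum_erase S _ hl
      have := hQ.2 (S.erase l)
      rw [hS] at hsplit
      linarith
    have hneg : ∀ l, l ∉ S → x l ≤ 0 := by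
      intro l hl
      have hsplit : (∑ i ∈ insert l S, x i) = x l + ∑ i ∈ S, x i := Finset.sum_insert hl
      have := hQ.2 (insert l S)
      rw [hS] at hsplit
      linarith
    -- the positive mass equals 1
    have hmass : (∑ l, max (x l) 0) = 1 := by
      have hsplit : (∑ l ∈ S, max (x l) 0) + (∑ l ∈ Sᶜ, max (x l) 0) = ∑ l, max (x l) 0 :=
        Finset.sum_add_sum_compl S _
      have h1 : (∑ l ∈ S, max (x l) 0) = ∑ l ∈ S, x l :=
        Finset.sum_congr rfl (fun l hl => max_eq_left (hpos l hl))
      have h2 : (∑ l ∈ Sᶜ, max (x l) 0) = 0 :=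
        Finset.sum_eq_zero (fun l hl => max_eq_right (hneg l (Finset.mem_compl.mp hl)))
      rw [h1, h2, hS] at hsplit
      linarith
    obtain ⟨T, c, hadm, hsigns, hsumc, hvec⟩ := RP.decomp hn2 n x (by
        simpa using Finset.card_filter_le Finset.univ (fun i => x i ≠ 0)) hQ.1
    rw [hmass] at hsumc
    have hTne : T.Nonempty := by
      rcases Finset.eq_empty_or_nonempty T with h | h
      · exfalso; rw [h, Finset.sum_empty] at hsumc; norm_num at hsumc
      · exact h
    have hcm : T.centerMass c (RP.rootVec n) = x := by
      rw [Finset.centerMass_eq_of_sum_1 _ _ hsumc]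
      exact hvec
    have hmem : x ∈ convexHull ℝ
        ((fun p : Fin n × Fin n =>
          EuclideanSpace.single p.1 (1 : ℝ) - EuclideanSpace.single p.2 (1 : ℝ)) '' ↑T) := by
      rw [← hcm]
      exact Finset.centerMass_mem_convexHull T (fun p hp => le_of_lt (hsigns p hp).1)
        (by rw [hsumc]; norm_num) (fun p hp => ⟨p, hp, rfl⟩)
    exact Set.mem_biUnion (⟨hadm, hTne⟩ : IsAdmissible T ∧ T.Nonempty) hmem
  · intro hx
    rw [Set.mem_iUnion₂] at hx
    obtain ⟨T, ⟨hadm, hTne⟩, hxT⟩ := hx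
    set S : Finset (Fin n) := T.image Prod.fst with hSdef
    have hS1 : S.Nonempty := hTne.image _
    have htail : ∀ p ∈ T, p.2 ∉ S := by
      intro p hp hmem
      obtain ⟨q, hq, hq1⟩ := Finset.mem_image.mp hmem
      exact RP.adm_head_ne_tail hn2 hadm hp hq hq1.symm
    obtain ⟨p₀, hp₀⟩ := hTne
    have hS2 : S ≠ Finset.univ := by
      intro h
      exact htail p₀ hp₀ (h ▸ Finset.mem_univ _)
    -- the admissible simplex lies in the facet hyperplane slice of the polytope
    have hsub : convexHull ℝ
        ((fun p : Fin n × Fin n =>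
          EuclideanSpace.single p.1 (1 : ℝ) - EuclideanSpace.single p.2 (1 : ℝ)) '' ↑T)
        ⊆ {z : EuclideanSpace ℝ (Fin n) | z ∈ RP.RootP n ∧ (∑ i ∈ S, z i) = 1} := by
      apply convexHull_min
      · rintro z ⟨p, hp, rfl⟩
        have hpT : p ∈ T := hp
        constructor
        · exact subset_convexHull ℝ _ (RP.rootVec_mem_gens (hadm.1 p hpT))
        · have : (∑ i ∈ S, RP.rootVec n p i)
              = (if p.1 ∈ S then (1:ℝ) else 0) - (if p.2 ∈ S then 1 else 0) :=
            RP.sum_rootVec p S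
          rw [show (∑ i ∈ S, (EuclideanSpace.single p.1 (1:ℝ)
              - EuclideanSpace.single p.2 (1:ℝ) : EuclideanSpace ℝ (Fin n)) i)
              = ∑ i ∈ S, RP.rootVec n p i from rfl, this,
            if_pos (Finset.mem_image.mpr ⟨p, hpT, rfl⟩), if_neg (htail p hpT)]
          norm_num
      · have hconv1 : Convex ℝ (RP.RootP n) := convex_convexHull ℝ _
        have hlin : IsLinearMap ℝ (fun y : EuclideanSpace ℝ (Fin n) => ∑ i ∈ S, y i) :=
          ⟨fun a b => by simp [Finset.sum_add_distrib], fun c a => by simp [Finset.mul_sum]⟩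
        have hconv2 : Convex ℝ {z : EuclideanSpace ℝ (Fin n) | (∑ i ∈ S, z i) = 1} :=
          convex_hyperplane hlin 1
        exact hconv1.inter hconv2
    obtain ⟨hxP, hxS⟩ := hsub hxT
    exact RP.mem_frontier_of_eq_one hn2 hxP S hS1 hS2 hxS
end

section
/- Let n ≥ 3 and let T be an admissible family of ordered pairs on Fin n. Then the rotated family α·T := {(i+1, j+1) : (i,j) ∈ T} and the reflected family β·T := {(1−j, 1−i) : (i,j) ∈ T} (all operations mod n in Fin n) are again admissible families. -/
section
variable {n : ℕ}

lemma aux_nat (n A B E : ℕ) (hA : A < n) (hB : B < n) (hE : E < n)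
    (h : (A + B + 1) % n = E) : (A < E ↔ B < E) := by
  rcases Nat.lt_or_ge (A + B + 1) n with h' | h'
  · rw [Nat.mod_eq_of_lt h'] at h; omega
  · rw [Nat.mod_eq_sub_mod h', Nat.mod_eq_of_lt (by omega)] at h; omega

lemma aux_iff [NeZero n] (a b e : Fin n) (h : a + b + 1 = e) :
    ((a : ℕ) < (e : ℕ)) ↔ ((b : ℕ) < (e : ℕ)) := by
  refine aux_nat n _ _ _ a.isLt b.isLt e.isLt ?_
  rw [← h]
  simp [Fin.add_def, Fin.val_one', Nat.add_mod]

lemma arc_rot [NeZero n] (c i j : Fin n) :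
    arcSet (i + c) (j + c) = (fun x => x - c) ⁻¹' arcSet i j := by
  ext x
  simp only [arcSet, Set.mem_setOf_eq, Set.mem_preimage]
  have h1 : x - (i + c) = x - c - i := by abel
  have h2 : j + c - (i + c) = j - i := by abel
  rw [h1, h2]

lemma arc_refl [NeZero n] (c i j : Fin n) :
    arcSet (c - j) (c - i) = (fun x => c - 1 - x) ⁻¹' arcSet i j := by
  ext x
  simp only [arcSet, Set.mem_setOf_eq, Set.mem_preimage]
  have h2 : (c - i) - (c - j) = j - i := by abel
  rw [h2]
  exact aux_iff _ _ _ (by abel)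

lemma admissible_map (g : Fin n × Fin n → Fin n × Fin n) (e : Fin n ≃ Fin n)
    (harc : ∀ p : Fin n × Fin n, arcSet (g p).1 (g p).2 = (e : Fin n → Fin n) ⁻¹' arcSet p.1 p.2)
    (hne : ∀ p : Fin n × Fin n, p.1 ≠ p.2 → (g p).1 ≠ (g p).2)
    (hend : ∀ p q : Fin n × Fin n, (g p).2 = (g q).1 → p.2 = q.1 ∨ q.2 = p.1)
    (T : Finset (Fin n × Fin n)) (hT : IsAdmissible T) : IsAdmissible (T.image g) := by
  constructor
  · intro P hP
    obtain ⟨p, hp, rfl⟩ := Finset.mem_image.1 hP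
    exact hne p (hT.1 p hp)
  · intro P hP Q hQ hPQ
    obtain ⟨p, hp, rfl⟩ := Finset.mem_image.1 hP
    obtain ⟨q, hq, rfl⟩ := Finset.mem_image.1 hQ
    have H := hT.2 p hp q hq (fun h => hPQ (congrArg g h))
    rw [harc p, harc q, ← Set.preimage_inter]
    constructor
    · intro hne'
      obtain ⟨x, hx⟩ := hne'
      rcases H.1 ⟨e x, hx⟩ with h | h
      · exact Or.inl (Set.preimage_mono h)
      · exact Or.inr (Set.preimage_mono h)
    · intro hemp
      have h0 : arcSet p.1 p.2 ∩ arcSet q.1 q.2 = ∅ := by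
        by_contra h
        obtain ⟨y, hy⟩ := Set.nonempty_iff_ne_empty.2 h
        have : e.symm y ∈ (e : Fin n → Fin n) ⁻¹' (arcSet p.1 p.2 ∩ arcSet q.1 q.2) := by
          simpa using hy
        rw [hemp] at this
        exact this
      obtain ⟨h1, h2⟩ := H.2 h0
      constructor
      · intro h; rcases hend p q h with h' | h'; exacts [h1 h', h2 h']
      · intro h; rcases hend q p h with h' | h'; exacts [h2 h', h1 h']

end


/-- The rotation `(i,j) ↦ (i+1, j+1)` and the reflection `(i,j) ↦ (1-j, 1-i)`
(all operations mod `n`) preserve admissibility of families of arcs. -/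
theorem admissible_rotate_reflect (n : ℕ) (hn : 3 ≤ n)
    (T : Finset (Fin n × Fin n)) (hT : IsAdmissible T) :
    IsAdmissible (T.image fun p => (p.1 + (⟨1, by omega⟩ : Fin n), p.2 + (⟨1, by omega⟩ : Fin n))) ∧
    IsAdmissible (T.image fun p => ((⟨1, by omega⟩ : Fin n) - p.2, (⟨1, by omega⟩ : Fin n) - p.1)) := by
  haveI : NeZero n := ⟨by omega⟩
  set c : Fin n := ⟨1, by omega⟩ with hc
  constructor
  · refine admissible_map _ (Equiv.subRight c) (fun p => ?_) (fun p h => ?_) (fun p q h => ?_) T hT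
    · simpa [Equiv.subRight] using arc_rot c p.1 p.2
    · simpa using h
    · left; simpa using h
  · refine admissible_map _ (Equiv.subLeft (c - 1)) (fun p => ?_) (fun p h => ?_) (fun p q h => ?_) T hT
    · have := arc_refl (n := n) c p.1 p.2
      simpa [Equiv.subLeft, sub_sub] using this
    · simpa [sub_right_injective.ne_iff] using h.symm
    · right; simpa using h.symm
end

section
/- Let n ≥ 3. For i, j ∈ Fin n let d(i,j) be the clock distance (the unique integer with 0 ≤ d(i,j) < n and i + d(i,j) = j mod n) and define ρ : Fin n → Fin n → ℝ by ρ(i,j) := d(i,j)·(n² − n + 1)/n − d(i,j)·(d(i,j) + 1)/2. Then ρ is a quasi-metric satisfying the strict triangle inequality: ρ(i,i) = 0 for all i, ρ(i,j) > 0 whenever i ≠ j, and ρ(i,k) < ρ(i,j) + ρ(j,k) whenever i, j, k are pairwise distinct. -/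
/-- The explicit quasi-metric on `Fin n` of Proposition 5.14: in terms of the
clock distance `d(i,j)` (the representative in `[0, n)` of `j - i` mod `n`),
`ρ(i,j) = d(i,j)·(n² - n + 1)/n - d(i,j)(d(i,j) + 1)/2`. -/
noncomputable def cycloQuasiMetric (n : ℕ) (i j : Fin n) : ℝ :=
  (((j - i : Fin n) : ℕ) : ℝ) * ((n : ℝ) ^ 2 - n + 1) / n -
    (((j - i : Fin n) : ℕ) : ℝ) * ((((j - i : Fin n) : ℕ) : ℝ) + 1) / 2



private lemma cyclo_f_pos (n d : ℕ) (hn : 3 ≤ n) (hd : 1 ≤ d) (hd' : d < n) :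
    0 < (d : ℝ) * ((n : ℝ) ^ 2 - n + 1) / n - (d : ℝ) * ((d : ℝ) + 1) / 2 := by
  have hn0 : (0 : ℝ) < n := by positivity
  have hd1 : (1 : ℝ) ≤ d := by exact_mod_cast hd
  have hdn : (d : ℝ) ≤ (n : ℝ) - 1 := by
    have : (d : ℝ) + 1 ≤ n := by exact_mod_cast hd'
    linarith
  have hn3 : (3 : ℝ) ≤ n := by exact_mod_cast hn
  rw [sub_pos, div_lt_div_iff₀ (by norm_num) hn0]
  have h1 : (0:ℝ) < 2*((n:ℝ)^2 - n + 1) - ((d:ℝ)+1)*n := by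
    nlinarith [sq_nonneg ((n:ℝ) - 1)]
  nlinarith [mul_pos (lt_of_lt_of_le one_pos hd1) h1]

private lemma cyclo_key (n a b c : ℕ) (hn : 3 ≤ n) (ha : 1 ≤ a) (hb : 1 ≤ b)
    (ha' : a < n) (hb' : b < n) (hc' : c < n)
    (hcase : a + b = c ∨ a + b = c + n) :
    (c : ℝ) * ((n : ℝ) ^ 2 - n + 1) / n - (c : ℝ) * ((c : ℝ) + 1) / 2 <
      ((a : ℝ) * ((n : ℝ) ^ 2 - n + 1) / n - (a : ℝ) * ((a : ℝ) + 1) / 2) +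
      ((b : ℝ) * ((n : ℝ) ^ 2 - n + 1) / n - (b : ℝ) * ((b : ℝ) + 1) / 2) := by
  have hn0 : (0 : ℝ) < n := by positivity
  have hn0' : (n : ℝ) ≠ 0 := ne_of_gt hn0
  have ha1 : (1 : ℝ) ≤ a := by exact_mod_cast ha
  have hb1 : (1 : ℝ) ≤ b := by exact_mod_cast hb
  have han : (a : ℝ) + 1 ≤ n := by exact_mod_cast ha'
  have hbn : (b : ℝ) + 1 ≤ n := by exact_mod_cast hb'
  have hcn : (c : ℝ) + 1 ≤ n := by exact_mod_cast hc'
  have hn3 : (3 : ℝ) ≤ n := by exact_mod_cast hn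
  rcases hcase with h | h
  · have hr : (c : ℝ) = a + b := by exact_mod_cast h.symm
    rw [hr]
    field_simp
    have hab : (0:ℝ) < (a:ℝ) * b * (n * n) := by positivity
    nlinarith [hab]
  · have hr : (a : ℝ) + b = c + n := by exact_mod_cast h
    field_simp
    have hb2 : (b:ℝ) = c + n - a := by linarith
    have hab : (a:ℝ)*b = a*c + a*n - a*a := by rw [hb2]; ring
    have hP : (0:ℝ) ≤ ((a:ℝ) - c - 1) * (n - 1 - a) := by
      have h1 : (c:ℝ) + 1 ≤ a := by linarith
      have h2 : (a:ℝ) ≤ n - 1 := by linarith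
      nlinarith
    have key2 : (0:ℝ) < 3*(n:ℝ)^2 - 3*n + 2 + 2*(a:ℝ)*b - 2*n*(a+b) := by
      nlinarith [hP, hab, mul_pos (by linarith : (0:ℝ) < (n:ℝ) - 1) (by linarith : (0:ℝ) < (n:ℝ) - 2)]
    have hc2 : (c:ℝ) = a + b - n := by linarith
    rw [hc2]
    nlinarith [mul_pos key2 (mul_pos hn0 hn0)]

/-- The explicit function `ρ` is a quasi-metric satisfying the strict triangle
inequality: it vanishes exactly on the diagonal, is positive off the diagonal,
and `ρ(i,k) < ρ(i,j) + ρ(j,k)` for pairwise distinct `i, j, k`. -/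
theorem cycloQuasiMetric_is_strict_quasiMetric (n : ℕ) (hn : 3 ≤ n) :
    (∀ i, cycloQuasiMetric n i i = 0) ∧
    (∀ i j, i ≠ j → 0 < cycloQuasiMetric n i j) ∧
    (∀ i j k, i ≠ j → j ≠ k → i ≠ k →
      cycloQuasiMetric n i k < cycloQuasiMetric n i j + cycloQuasiMetric n j k) := by
  haveI : NeZero n := ⟨by omega⟩
  refine ⟨fun i => ?_, fun i j hij => ?_, fun i j k hij hjk hik => ?_⟩
  · simp [cycloQuasiMetric]
  · have hd0 : (j - i : Fin n) ≠ 0 := sub_ne_zero.2 (Ne.symm hij)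
    have hd : 1 ≤ ((j - i : Fin n) : ℕ) :=
      Nat.pos_of_ne_zero (fun h => hd0 (Fin.ext (by simpa using h)))
    simp only [cycloQuasiMetric]; exact cyclo_f_pos n _ hn hd (Fin.is_lt _)
  · set a := ((j - i : Fin n) : ℕ) with ha_def
    set b := ((k - j : Fin n) : ℕ) with hb_def
    set c := ((k - i : Fin n) : ℕ) with hc_def
    have ha : 1 ≤ a := Nat.pos_of_ne_zero (fun h => (sub_ne_zero.2 (Ne.symm hij)) (Fin.ext (by simpa [ha_def] using h)))
    have hb : 1 ≤ b := Nat.pos_of_ne_zero (fun h => (sub_ne_zero.2 (Ne.symm hjk)) (Fin.ext (by simpa [hb_def] using h)))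
    have hsum : (k - i : Fin n) = (j - i) + (k - j) := by abel
    have hc_mod : c = (a + b) % n := by
      rw [hc_def, hsum, Fin.val_add]
    have ha' : a < n := Fin.is_lt _
    have hb' : b < n := Fin.is_lt _
    have hc' : c < n := Fin.is_lt _
    have hcase : a + b = c ∨ a + b = c + n := by
      rcases lt_or_ge (a + b) n with h | h
      · rw [Nat.mod_eq_of_lt h] at hc_mod; omega
      · have hm : (a + b) % n = a + b - n := by
          rw [Nat.mod_eq_sub_mod h, Nat.mod_eq_of_lt (by omega)]
        rw [hm] at hc_mod; omega
    simp only [cycloQuasiMetric, ← ha_def, ← hb_def, ← hc_def]; exact cyclo_key n a b c hn ha hb ha' hb' hc' hcase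
end

section
/- Let n ≥ 2 and let êᵢ := e_i − (1/n) • ∑ₖ e_k ∈ ℝⁿ. Then the polar dual, within the hyperplane H₀, of the type A root polytope Root_n equals the Δ-zonotope ∑ᵢ segment ℝ 0 êᵢ: that is, {x ∈ ℝⁿ : ∑ᵢ xᵢ = 0 and ⟨x, y⟩ ≤ 1 for all y ∈ Root_n} = ∑_{i ∈ Fin n} segment ℝ 0 êᵢ, where the sum on the right is the Minkowski (pointwise) sum of the segments from 0 to êᵢ. -/
open scoped Pointwise RealInnerProductSpace

/-- The polar dual, within the hyperplane `H₀ = {x : ∑ᵢ xᵢ = 0}`, of the type A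
root polytope `Rootₙ = conv{e_i - e_j : i ≠ j}` is the Δ-zonotope
`∑ᵢ [0, êᵢ]`, where `êᵢ = e_i - (1/n) ∑ₖ e_k`. -/
theorem polar_rootPolytope_eq_deltaZonotope (n : ℕ) (hn : 2 ≤ n) :
    {x : EuclideanSpace ℝ (Fin n) | (∑ i, x i) = 0 ∧
        ∀ y ∈ convexHull ℝ {v : EuclideanSpace ℝ (Fin n) |
            ∃ i j : Fin n, i ≠ j ∧
              v = EuclideanSpace.single i (1 : ℝ) - EuclideanSpace.single j (1 : ℝ)},
          ⟪x, y⟫ ≤ 1} =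
      ∑ i : Fin n, segment ℝ (0 : EuclideanSpace ℝ (Fin n))
        (EuclideanSpace.single i (1 : ℝ) -
          ((1 : ℝ) / n) • ∑ k, EuclideanSpace.single k (1 : ℝ)) := by
  have hn0 : (n : ℝ) ≠ 0 := by
    have : (0:ℕ) < n := by omega
    exact_mod_cast this.ne'
  haveI : Nonempty (Fin n) := ⟨⟨0, by omega⟩⟩
  set E : Fin n → EuclideanSpace ℝ (Fin n) := fun i =>
    EuclideanSpace.single i (1 : ℝ) -
      ((1 : ℝ) / n) • ∑ k, EuclideanSpace.single k (1 : ℝ) with hE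
  have sumApply : ∀ (f : Fin n → EuclideanSpace ℝ (Fin n)) (j : Fin n),
      (∑ i, f i) j = ∑ i, f i j := fun f j => by
        rw [WithLp.ofLp_sum]; exact Finset.sum_apply j Finset.univ _
  have hEcoord : ∀ i j : Fin n, E i j = (if j = i then 1 else 0) - 1 / n := by
    intro i j
    simp only [hE, PiLp.sub_apply, PiLp.smul_apply, smul_eq_mul,
      EuclideanSpace.single_apply, sumApply]
    simp
  -- a point with coefficients b has coordinates b j - (∑ b)/n
  have hcoords : ∀ (b : Fin n → ℝ) (j : Fin n),
      (∑ i, b i • E i) j = b j - (1 / n) * ∑ i, b i := by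
    intro b j
    rw [sumApply]
    have : ∀ i, (b i • E i) j = b i * ((if j = i then 1 else 0) - 1 / n) := by
      intro i; rw [PiLp.smul_apply, smul_eq_mul, hEcoord]
    rw [Finset.sum_congr rfl fun i _ => this i]
    simp only [mul_sub, Finset.sum_sub_distrib, mul_ite, mul_one, mul_zero,
      Finset.sum_ite_eq, Finset.mem_univ, if_true]
    rw [Finset.mul_sum]
    congr 1
    exact Finset.sum_congr rfl fun i _ => mul_comm _ _
  ext x
  simp only [Set.mem_setOf_eq, Set.mem_fintype_sum]
  constructor
  · rintro ⟨hsum, hpolar⟩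
    have hroots : ∀ i j : Fin n, i ≠ j → x i - x j ≤ 1 := by
      intro i j hij
      have h := hpolar _ (subset_convexHull ℝ _ ⟨i, j, hij, rfl⟩)
      rwa [inner_sub_right, EuclideanSpace.inner_single_right,
        EuclideanSpace.inner_single_right, RCLike.conj_to_real, RCLike.conj_to_real,
        one_mul, one_mul] at h
    obtain ⟨j0, -, hj0⟩ := Finset.exists_mem_eq_inf' (Finset.univ_nonempty) x
    set m : ℝ := x j0 with hm
    have ht0 : ∀ i, 0 ≤ x i - m := by
      intro i
      have : x j0 ≤ x i :=
        calc x j0 = Finset.univ.inf' Finset.univ_nonempty x := hj0.symm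
        _ ≤ x i := Finset.inf'_le x (Finset.mem_univ i)
      linarith
    have ht1 : ∀ i, x i - m ≤ 1 := by
      intro i
      rcases eq_or_ne i j0 with rfl | hne
      · simp [hm]
      · exact (sub_le_iff_le_add).2 (by linarith [hroots i j0 hne])
    refine ⟨fun i => (x i - m) • E i, fun i => ?_, ?_⟩
    · exact ⟨1 - (x i - m), x i - m, by linarith [ht1 i], ht0 i, by ring,
        by rw [smul_zero, zero_add]⟩
    · ext j
      rw [hcoords]
      have hsb : ∑ i, (x i - m) = 0 - (n : ℝ) * m := by
        rw [Finset.sum_sub_distrib, hsum, Finset.sum_const, Finset.card_univ,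
          Fintype.card_fin, nsmul_eq_mul]
      rw [hsb]
      field_simp
      ring
  · rintro ⟨g, hg, rfl⟩
    choose a b ha hb hab hgeq using fun i => hg i
    have hgE : ∀ i, g i = b i • E i := by
      intro i
      have := hgeq i
      rw [smul_zero, zero_add] at this
      exact this.symm
    have hb1 : ∀ i, b i ≤ 1 := fun i => by linarith [ha i, hab i]
    have hco : ∀ j, (∑ i, g i) j = b j - (1 / n) * ∑ i, b i := by
      intro j
      rw [show (∑ i, g i) = ∑ i, b i • E i from Finset.sum_congr rfl fun i _ => hgE i,
        hcoords]
    constructor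
    · rw [Finset.sum_congr rfl fun j _ => hco j]
      rw [Finset.sum_sub_distrib, Finset.sum_const, Finset.card_univ, Fintype.card_fin,
        nsmul_eq_mul]
      field_simp
      ring
    · intro y hy
      have hconv : Convex ℝ {y : EuclideanSpace ℝ (Fin n) | ⟪∑ i, g i, y⟫ ≤ 1} :=
        convex_halfSpace_le ⟨fun a b => inner_add_right _ _ _,
          fun c a => real_inner_smul_right _ _ _⟩ 1
      refine convexHull_min ?_ hconv hy
      rintro v ⟨i, j, hij, rfl⟩
      have : ⟪∑ i, g i, EuclideanSpace.single i (1:ℝ) - EuclideanSpace.single j 1⟫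
          = (∑ k, g k) i - (∑ k, g k) j := by
        rw [inner_sub_right, EuclideanSpace.inner_single_right,
          EuclideanSpace.inner_single_right, RCLike.conj_to_real, RCLike.conj_to_real,
          one_mul, one_mul]
      rw [Set.mem_setOf_eq, this, hco, hco]
      have := hb1 i
      have := hb j
      linarith
end

section
/- Let n ≥ 2, let H₀ := {x ∈ ℝⁿ : ∑ᵢ xᵢ = 0} be regarded as a finite-dimensional real inner product space with the inner product induced from ℝⁿ, and let êᵢ := e_i − (1/n) • ∑ₖ e_k, regarded as elements of H₀. Let A : H₀ ≃ₗ[ℝ] H₀ be a linear equivalence and let B be the inverse of the adjoint of A. Then the polar within H₀ of the generalized root polytope convexHull ℝ {A êᵢ − A êⱼ : i ≠ j} equals the Δ-zonotope ∑ᵢ segment ℝ 0 (B êᵢ): that is, {x ∈ H₀ : ∀ i ≠ j, ⟨A êᵢ − A êⱼ, x⟩ ≤ 1} = ∑_{i ∈ Fin n} segment ℝ 0 (B êᵢ), the Minkowski (pointwise) sum of the segments from 0 to B êᵢ. -/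
open scoped Pointwise RealInnerProductSpace

def H0 (n : ℕ) : Submodule ℝ (EuclideanSpace ℝ (Fin n)) where
  carrier := {x | ∑ i, x i = 0}
  add_mem' := by
    intro a b ha hb
    simp only [Set.mem_setOf_eq] at *
    simp [PiLp.add_apply, Finset.sum_add_distrib, ha, hb]
  zero_mem' := by simp
  smul_mem' := by
    intro c x hx
    simp only [Set.mem_setOf_eq] at *
    simp [PiLp.smul_apply, ← Finset.mul_sum, hx]

theorem mem_H0_iff {n : ℕ} (x : EuclideanSpace ℝ (Fin n)) :
    x ∈ H0 n ↔ ∑ i, x i = 0 := Iff.rfl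

noncomputable def ehat (n : ℕ) (i : Fin n) : EuclideanSpace ℝ (Fin n) :=
  EuclideanSpace.single i (1 : ℝ) - ((1 : ℝ) / n) • ∑ k, EuclideanSpace.single k (1 : ℝ)

theorem ehat_mem_H0 (n : ℕ) (i : Fin n) : ehat n i ∈ H0 n := by
  have hn : (n : ℝ) ≠ 0 := by
    have : 0 < n := i.pos
    positivity
  have hsum : ∀ j : Fin n, (∑ k : Fin n, EuclideanSpace.single k (1:ℝ)) j = 1 := by
    intro j
    rw [WithLp.ofLp_sum, Finset.sum_apply]
    simp [EuclideanSpace.single_apply]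
  rw [mem_H0_iff]
  simp only [ehat, PiLp.sub_apply, PiLp.smul_apply, EuclideanSpace.single_apply,
    Finset.sum_sub_distrib, smul_eq_mul, hsum, mul_one]
  rw [Finset.sum_ite_eq' Finset.univ i fun _ => (1 : ℝ)]
  simp only [Finset.mem_univ, if_true, Finset.sum_const, Finset.card_univ,
    Fintype.card_fin, nsmul_eq_mul]
  field_simp
  all_goals norm_num

section aux

variable {n : ℕ}

lemma ehat_apply (i j : Fin n) :
    ehat n i j = (if j = i then (1:ℝ) else 0) - 1 / n := by
  have hsum : (∑ k : Fin n, EuclideanSpace.single k (1:ℝ)) j = 1 := by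
    rw [WithLp.ofLp_sum, Finset.sum_apply]
    simp [EuclideanSpace.single_apply]
  simp [ehat, PiLp.sub_apply, PiLp.smul_apply, hsum, EuclideanSpace.single_apply]

lemma inner_vv (i : Fin n) (y : H0 n) :
    ⟪(⟨ehat n i, ehat_mem_H0 n i⟩ : H0 n), y⟫ = (y : EuclideanSpace ℝ (Fin n)) i := by
  have hy : ∑ j, (y : EuclideanSpace ℝ (Fin n)) j = 0 := y.2
  rw [Submodule.coe_inner]
  simp only [PiLp.inner_apply, RCLike.inner_apply, conj_trivial, ehat_apply]
  simp only [mul_comm ((y : EuclideanSpace ℝ (Fin n)) _)]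
  simp only [sub_mul, ite_mul, one_mul, zero_mul, Finset.sum_sub_distrib,
    Finset.sum_ite_eq' Finset.univ i, Finset.mem_univ, if_true]
  rw [← Finset.mul_sum, hy]
  ring

lemma coord_sum_vv (t : Fin n → ℝ) (j : Fin n) :
    ((↑(∑ i, t i • (⟨ehat n i, ehat_mem_H0 n i⟩ : H0 n)) :
      EuclideanSpace ℝ (Fin n)) j) = t j - (∑ i, t i) / n := by
  push_cast
  rw [WithLp.ofLp_sum, Finset.sum_apply]
  simp only [PiLp.smul_apply, smul_eq_mul, ehat_apply, mul_sub, mul_ite, mul_one, mul_zero,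
    Finset.sum_sub_distrib, Finset.sum_ite_eq' Finset.univ j, Finset.mem_univ, if_true]
  simp only [Finset.sum_ite_eq, Finset.mem_univ, if_true, ← Finset.sum_mul]
  ring

end aux

/-- Inside the hyperplane `H₀`, the polar of the generalized root polytope
`conv{Aêᵢ - Aêⱼ : i ≠ j}` associated to a linear automorphism `A` of `H₀` is
the Δ-zonotope `∑ᵢ [0, Bêᵢ]`, where `B = (A*)⁻¹` is the inverse of the adjoint
of `A`. -/
theorem polar_generalized_rootPolytope_eq_deltaZonotope (n : ℕ) (hn : 2 ≤ n)
    (A B : H0 n ≃ₗ[ℝ] H0 n)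
    (hB : (LinearMap.adjoint (A : H0 n →ₗ[ℝ] H0 n)).comp (B : H0 n →ₗ[ℝ] H0 n)
      = LinearMap.id) :
    {x : H0 n | ∀ i j : Fin n, i ≠ j →
        ⟪A ⟨ehat n i, ehat_mem_H0 n i⟩ - A ⟨ehat n j, ehat_mem_H0 n j⟩, x⟫ ≤ 1} =
      ∑ i : Fin n, segment ℝ (0 : H0 n) (B ⟨ehat n i, ehat_mem_H0 n i⟩) := by
  classical
  have hnpos : 0 < n := lt_of_lt_of_le two_pos hn
  have hnR : (n : ℝ) ≠ 0 := by positivity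
  haveI : Nonempty (Fin n) := ⟨⟨0, hnpos⟩⟩
  set v : Fin n → H0 n := fun i => ⟨ehat n i, ehat_mem_H0 n i⟩ with hv
  set Aadj := LinearMap.adjoint (A : H0 n →ₗ[ℝ] H0 n) with hAadj
  have hABapp : ∀ z, Aadj (B z) = z := fun z => by
    simpa using LinearMap.congr_fun hB z
  have hsurj : Function.Surjective Aadj := fun z => ⟨B z, hABapp z⟩
  have hinj : Function.Injective Aadj := LinearMap.injective_iff_surjective.mpr hsurj
  have hAD : ∀ (u z : H0 n), ⟪A u, z⟫ = ⟪u, Aadj z⟫ := fun u z =>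
    (LinearMap.adjoint_inner_right (A : H0 n →ₗ[ℝ] H0 n) u z).symm
  ext x
  simp only [Set.mem_setOf_eq, Set.mem_fintype_sum]
  constructor
  · intro hx
    set y := Aadj x with hy
    have hsy : ∑ i, (y : EuclideanSpace ℝ (Fin n)) i = 0 := y.2
    have hyij : ∀ i j : Fin n, i ≠ j →
        (y : EuclideanSpace ℝ (Fin n)) i - (y : EuclideanSpace ℝ (Fin n)) j ≤ 1 := by
      intro i j hij
      have := hx i j hij
      rw [inner_sub_left, hAD, hAD, inner_vv, inner_vv, ← hy] at this
      linarith
    set m := Finset.univ.inf' Finset.univ_nonempty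
      (fun i => (y : EuclideanSpace ℝ (Fin n)) i) with hm
    set t : Fin n → ℝ := fun i => (y : EuclideanSpace ℝ (Fin n)) i - m with ht
    have ht0 : ∀ i, 0 ≤ t i := fun i =>
      sub_nonneg.2 (Finset.inf'_le _ (Finset.mem_univ i))
    have ht1 : ∀ i, t i ≤ 1 := by
      intro i
      obtain ⟨j, -, hj⟩ := Finset.exists_mem_eq_inf' Finset.univ_nonempty
        (fun i => (y : EuclideanSpace ℝ (Fin n)) i)
      rcases eq_or_ne i j with rfl | hij
      · simp [ht, hm, hj]
      · have := hyij i j hij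
        simp only [ht, hm, hj]
        linarith
    have hts : ∑ i, t i = -(n * m) := by
      simp [ht, Finset.sum_sub_distrib, hsy]
    have key : (∑ i, t i • v i) = y := by
      apply Subtype.ext
      apply PiLp.ext
      intro j
      rw [hv]
      rw [coord_sum_vv t j, hts]
      simp only [ht]
      field_simp
      ring
    refine ⟨fun i => t i • B (v i), fun i => ?_, ?_⟩
    · rw [segment_eq_image]
      exact ⟨t i, ⟨ht0 i, ht1 i⟩, by simp; rfl⟩
    · apply hinj
      rw [map_sum]
      simp only [map_smul, hABapp]
      rw [key, hy]
  · rintro ⟨g, hg, rfl⟩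
    have hrep : ∀ i, ∃ s : ℝ, 0 ≤ s ∧ s ≤ 1 ∧ g i = s • B (v i) := by
      intro i
      have := hg i
      rw [segment_eq_image] at this
      obtain ⟨s, ⟨h0, h1⟩, hs⟩ := this
      exact ⟨s, h0, h1, by simp at hs; exact hs.symm⟩
    choose t ht0 ht1 htg using hrep
    intro i j hij
    have hAsum : Aadj (∑ k, g k) = ∑ k, t k • v k := by
      rw [map_sum]
      congr 1
      funext k
      rw [htg k, map_smul, hABapp]
    rw [inner_sub_left, hAD, hAD, hAsum]
    rw [hv]
    rw [inner_vv, inner_vv, coord_sum_vv, coord_sum_vv]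
    have := ht1 i
    have := ht0 j
    linarith
end

section
/- Let n ≥ 2. The type A root polytope admits the Minkowski sum decomposition Root_n = Δ + (−Δ): that is, convexHull ℝ {e_i − e_j : i, j ∈ Fin n, i ≠ j} = convexHull ℝ {e_i : i ∈ Fin n} + convexHull ℝ {−e_i : i ∈ Fin n}, where + denotes the pointwise (Minkowski) sum of sets. -/
open scoped Pointwise

/-- The type A root polytope decomposes as the Minkowski sum
`Rootₙ = Δ + (-Δ)` of the standard simplex and its reflection. -/
theorem rootPolytope_eq_simplex_add_neg_simplex (n : ℕ) (hn : 2 ≤ n) :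
    convexHull ℝ {v : EuclideanSpace ℝ (Fin n) |
        ∃ i j : Fin n, i ≠ j ∧
          v = EuclideanSpace.single i (1 : ℝ) - EuclideanSpace.single j (1 : ℝ)} =
      convexHull ℝ (Set.range fun i : Fin n => EuclideanSpace.single i (1 : ℝ)) +
        convexHull ℝ (Set.range fun i : Fin n => -EuclideanSpace.single i (1 : ℝ)) := by
  classical
  set S : Set (EuclideanSpace ℝ (Fin n)) :=
    {v | ∃ i j : Fin n, i ≠ j ∧
        v = EuclideanSpace.single i (1 : ℝ) - EuclideanSpace.single j (1 : ℝ)} with hS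
  have h0 : (0 : EuclideanSpace ℝ (Fin n)) ∈ convexHull ℝ S := by
    have h01 : (⟨0, by omega⟩ : Fin n) ≠ ⟨1, by omega⟩ := by
      simp [Fin.ext_iff]
    have hx : (EuclideanSpace.single (⟨0, by omega⟩ : Fin n) (1 : ℝ)
        - EuclideanSpace.single (⟨1, by omega⟩ : Fin n) (1 : ℝ)) ∈ convexHull ℝ S :=
      subset_convexHull ℝ S ⟨_, _, h01, rfl⟩
    have hy : (EuclideanSpace.single (⟨1, by omega⟩ : Fin n) (1 : ℝ)
        - EuclideanSpace.single (⟨0, by omega⟩ : Fin n) (1 : ℝ)) ∈ convexHull ℝ S :=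
      subset_convexHull ℝ S ⟨_, _, h01.symm, rfl⟩
    have := (convex_convexHull ℝ S) hx hy (by norm_num : (0:ℝ) ≤ 1/2)
      (by norm_num : (0:ℝ) ≤ 1/2) (by norm_num)
    convert this using 1
    module
  have hsum : (Set.range fun i : Fin n => EuclideanSpace.single i (1 : ℝ)) +
      (Set.range fun i : Fin n => -EuclideanSpace.single i (1 : ℝ)) = S ∪ {0} := by
    ext v
    constructor
    · rintro ⟨x, ⟨i, rfl⟩, y, ⟨j, rfl⟩, rfl⟩
      by_cases h : i = j
      · subst h; right; simp
      · left; exact ⟨i, j, h, (sub_eq_add_neg _ _)⟩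
    · rintro (⟨i, j, h, rfl⟩ | h)
      · exact ⟨_, ⟨i, rfl⟩, _, ⟨j, rfl⟩, (sub_eq_add_neg _ _).symm⟩
      · simp only [Set.mem_singleton_iff] at h
        subst h
        exact ⟨_, ⟨(⟨0, by omega⟩ : Fin n), rfl⟩, _, ⟨(⟨0, by omega⟩ : Fin n), rfl⟩, by simp⟩
  rw [← convexHull_add, hsum]
  apply Set.Subset.antisymm
  · exact convexHull_mono Set.subset_union_left
  · apply convexHull_min _ (convex_convexHull ℝ S)
    rintro v (hv | hv)
    · exact subset_convexHull ℝ S hv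
    · simp only [Set.mem_singleton_iff] at hv
      subst hv; exact h0
end
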